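/- arXiv:2506.23064 — 6 statements merged into one kernel-verified Lean document; each statement's English description precedes it below -/
import Mathlib

section
/- Let a, N ∈ ℕ and m ∈ ℤ with m > N, and let λ ∈ ℂ with λ ∉ ℤ. Then Ξ(λ,a,N,m) = {0}, i.e. the only tuple in Ξ(λ,a,N,m) is the zero tuple. -/
noncomputable section

open Polynomial Finset

/-- The space `Pol_b[t]_even`: span of the monomials `t^(b-2i)`, `0 ≤ i ≤ ⌊b/2⌋`
(zero space when `b < 0`). -/
def polEven (b : ℤ) (f : ℂ[X]) : Prop :=
  ∀ n : ℕ, f.coeff n ≠ 0 → (n : ℤ) ≤ b ∧ (2 : ℤ) ∣ (b - n)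

/-- Imaginary Gegenbauer operator `S_ℓ^μ`. -/
def gegenS (μ : ℂ) (ℓ : ℤ) (f : ℂ[X]) : ℂ[X] :=
  -((1 + X ^ 2) * derivative (derivative f)
      + (1 + 2 * C μ) * X * derivative f
      - C ((ℓ : ℂ) * ((ℓ : ℂ) + 2 * μ)) * f)

/-- Euler operator `ϑ_t`. -/
def euler (f : ℂ[X]) : ℂ[X] := X * derivative f

/-- Renormalized Gegenbauer polynomial `C̃_n^μ(z)` for a natural number degree `n`. -/
def gegenC (μ : ℂ) (n : ℕ) : ℂ[X] :=
  ∑ k ∈ range (n / 2 + 1),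
    C ((-1 : ℂ) ^ k / ((k.factorial : ℂ) * ((n - 2 * k).factorial : ℂ)) *
        ∏ s ∈ range (n / 2 - k), (μ + (((n + 1) / 2 : ℕ) : ℂ) + (s : ℂ))) *
      (C 2 * X) ^ (n - 2 * k)

/-- `C̃_ℓ^μ(z)` for `ℓ : ℤ` (zero for `ℓ < 0`). -/
def gegenCZ (μ : ℂ) (ℓ : ℤ) : ℂ[X] := if 0 ≤ ℓ then gegenC μ ℓ.toNat else 0

/-- `C̃_ℓ^μ(it)`: substitution `z = it`. -/
def gegenCit (μ : ℂ) (ℓ : ℤ) : ℂ[X] := (gegenCZ μ ℓ).comp (C Complex.I * X)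

/-- `γ(μ, ℓ)`. -/
def gam (μ : ℂ) (ℓ : ℤ) : ℂ := if ℓ % 2 = 0 then μ + ((ℓ / 2 : ℤ) : ℂ) else 1

/-- `Γ(x+k)/Γ(x)` interpreted as a finite product (reciprocal for `k < 0`). -/
def gratio (x : ℂ) (k : ℤ) : ℂ :=
  if 0 ≤ k then ∏ i ∈ range k.toNat, (x + (i : ℂ))
  else (∏ i ∈ range (-k).toNat, (x + (k : ℂ) + (i : ℂ)))⁻¹

/-- `Γ(z₁)/Γ(z₂)` at integer arguments, as a finite product. -/
def gq (z₁ z₂ : ℤ) : ℂ := gratio (z₂ : ℂ) (z₁ - z₂)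

/-- The set `Λ(N,a,m)`, regarded as a subset of `ℂ`. -/
def LambdaSet (N a : ℕ) (m : ℤ) : Set ℂ :=
  { x | ∃ q : ℤ, max 0 ((N : ℤ) - a + m) ≤ q ∧ q ≤ 2 * N ∧
      x = (N : ℂ) + 1 - (a : ℂ) - (q : ℂ) }

/-- The set `M_ℓ^k`, regarded as a subset of `ℂ`. -/
def Mset (ℓ k : ℤ) : Set ℂ :=
  { x | ∃ d : ℤ, 0 ≤ d ∧ d ≤ ℓ / 2 - k - 1 ∧ x = -(((ℓ + 1) / 2 : ℤ) : ℂ) - (d : ℂ) }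

/-- The solution space `Ξ(λ,a,N,m)` of the system (A_j^±), (B_j^±), realized as
the set of tuples `(f_{-N},…,f_N)`, encoded as functions `ℤ → ℂ[X]` vanishing for `|j| > N`. -/
def XiSet (lam : ℂ) (a N : ℕ) (m : ℤ) : Set (ℤ → ℂ[X]) :=
  { f |
    (∀ j : ℤ, (N : ℤ) < |j| → f j = 0) ∧
    (∀ j : ℤ, |j| ≤ (N : ℤ) → polEven ((a : ℤ) - m + j) (f j)) ∧
    (∀ j : ℤ, 0 ≤ j → j ≤ (N : ℤ) →
      gegenS (lam + (j : ℂ) - 1) ((a : ℤ) + m - j) (f j)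
        - C (2 * ((N : ℂ) - (j : ℂ))) * derivative (f (j + 1)) = 0) ∧
    (∀ j : ℤ, 0 ≤ j → j ≤ (N : ℤ) →
      gegenS (lam + (j : ℂ) - 1) ((a : ℤ) - m - j) (f (-j))
        + C (2 * ((N : ℂ) - (j : ℂ))) * derivative (f (-j - 1)) = 0) ∧
    (∀ j : ℤ, 1 ≤ j → j ≤ (N : ℤ) →
      C (2 * (-(m : ℂ)) * (lam + (a : ℂ) - 1)) * f j
        + C (2 * (j : ℂ)) * (C (lam - 1) * f j + euler (f j))
        + C ((N : ℂ) - (j : ℂ)) * derivative (f (j + 1))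
        + C ((N : ℂ) + (j : ℂ)) * derivative (f (j - 1)) = 0) ∧
    (∀ j : ℤ, 1 ≤ j → j ≤ (N : ℤ) →
      C (2 * (m : ℂ) * (lam + (a : ℂ) - 1)) * f (-j)
        + C (2 * (j : ℂ)) * (C (lam - 1) * f (-j) + euler (f (-j)))
        - C ((N : ℂ) + (j : ℂ)) * derivative (f (-j + 1))
        - C ((N : ℂ) - (j : ℂ)) * derivative (f (-j - 1)) = 0) }

/-- The constant `C_{j,r}^+`. -/
def Cp (lam : ℂ) (a N : ℕ) (m : ℤ) (j r : ℕ) : ℂ :=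
  ((N - j).choose r : ℂ) * (((2 * N - r).factorial : ℂ) / ((N + j).factorial : ℂ)) *
    (∏ i ∈ range r, ((N : ℂ) - (m : ℂ) - (i : ℂ))) *
    (∏ i ∈ range r, (lam + (a : ℂ) - (N : ℂ) - 1 + (i : ℂ)))

/-- The constant `C_{j,r}^-`. -/
def Cm (lam : ℂ) (a N : ℕ) (m : ℤ) (j r : ℕ) : ℂ :=
  ((N - j).choose r : ℂ) * (((2 * N - r).factorial : ℂ) / ((N + j).factorial : ℂ)) *
    (∏ i ∈ range r, ((N : ℂ) + (m : ℂ) - (i : ℂ))) *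
    (∏ i ∈ range r, (lam + (a : ℂ) - (N : ℂ) - 1 + (i : ℂ)))

/-- The gamma factor `Γ_j^+`. -/
def GammaP (lam : ℂ) (a N : ℕ) (m : ℤ) (j : ℕ) : ℂ :=
  ∏ d ∈ range (N - j), gam (lam + (N : ℂ) - 1) ((a : ℤ) + m - (N : ℤ) - ((d : ℤ) + 1))

/-- The gamma factor `Γ_j^-`. -/
def GammaM (lam : ℂ) (a N : ℕ) (m : ℤ) (j : ℕ) : ℂ :=
  ∏ d ∈ range (N - j), gam (lam + (N : ℂ) - 1) ((a : ℤ) - m - (N : ℤ) - ((d : ℤ) + 1))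

/-- The constant `D_{j,r}` (with parameter `q`). -/
def Dc (N : ℕ) (m q : ℤ) (j r : ℕ) : ℂ :=
  ((N - j).choose r : ℂ) * (((2 * N - r).factorial : ℂ) / ((N + j).factorial : ℂ)) *
    (∏ i ∈ range r, ((N : ℂ) + (m : ℂ) - (i : ℂ))) *
    (∏ i ∈ range r, ((q : ℂ) - 2 * (N : ℂ) + (i : ℂ)))

/-- Binomial coefficient with integer upper argument: `binom(x,k) = (∏_{i<k}(x-i))/k!`. -/
def zbinom (x : ℤ) (k : ℕ) : ℂ := (∏ i ∈ range k, ((x : ℂ) - (i : ℂ))) / (k.factorial : ℂ)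

/-- The gamma factor `Γ(d,r)` of the paper (for integral `λ = λz`, `ν = νz`). -/
def GammaAB (N : ℕ) (m lamz nuz : ℤ) (d r : ℕ) : ℂ :=
  (d.choose r : ℂ) *
    gq (lamz + (nuz - lamz - m + (N : ℤ) - (d : ℤ) - 1) / 2)
       (lamz + (nuz - lamz - m - 1) / 2) *
    (((2 * N - r).factorial : ℂ) / (N.factorial : ℂ)) *
    (∏ i ∈ range r, ((N : ℂ) + (m : ℂ) - (i : ℂ)))

/-- The constant `A(d,r)` of the paper (for integral `λ = λz`, `ν = νz`). -/
def Acoef (N : ℕ) (m lamz nuz : ℤ) (d r : ℕ) : ℂ :=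
  (-1 : ℂ) ^ (nuz - 1) * GammaAB N m lamz nuz d r *
    gq (lamz + (-nuz - lamz - m + (N : ℤ) - (d : ℤ) + 1) / 2)
       (lamz + (nuz - lamz - m + (N : ℤ) - (d : ℤ) - 1) / 2) *
    ∏ i ∈ range r, ((N : ℂ) + (nuz : ℂ) - ((i : ℂ) + 1))

/-- The constant `B(d,r)` of the paper (for integral `λ = λz`, `ν = νz`). -/
def Bcoef (N : ℕ) (m lamz nuz : ℤ) (d r : ℕ) : ℂ :=
  (-1 : ℂ) ^ ((d : ℤ) - (N : ℤ)) * GammaAB N m lamz nuz (2 * N - d) r *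
    ∏ i ∈ range r, ((N : ℂ) - (nuz : ℂ) + 2 - ((i : ℂ) + 1))

/-- The predicate `(E_j^+)` on `f_j`. -/
def Eplus (lam : ℂ) (a N : ℕ) (m : ℤ) (qp : ℂ) (j : ℕ) (fj : ℂ[X]) : Prop :=
  C ((-Complex.I) ^ (N - j) * (((2 * N).factorial : ℂ) / ((N + j).factorial : ℂ)) *
      GammaP lam a N m j) * fj
    = C qp * ∑ r ∈ range (N - j + 1),
        C (Cp lam a N m j r) *
          gegenCit (lam + (N : ℂ) - 1 - (r : ℂ)) ((a : ℤ) + m - 2 * (N : ℤ) + (j : ℤ) + 2 * (r : ℤ))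

/-- The predicate `(E_j^-)` on `f_{-j}`. -/
def Eminus (lam : ℂ) (a N : ℕ) (m : ℤ) (qm : ℂ) (j : ℕ) (fj : ℂ[X]) : Prop :=
  C (Complex.I ^ (N - j) * (((2 * N).factorial : ℂ) / ((N + j).factorial : ℂ)) *
      GammaM lam a N m j) * fj
    = C qm * ∑ r ∈ range (N - j + 1),
        C (Cm lam a N m j r) *
          gegenCit (lam + (N : ℂ) - 1 - (r : ℂ)) ((a : ℤ) - m - 2 * (N : ℤ) + (j : ℤ) + 2 * (r : ℤ))

/-- The constant `C_{0,r}(m')` with integer parameter `a`. -/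
def C0r (lam : ℂ) (N : ℕ) (a m' : ℤ) (r : ℕ) : ℂ :=
  (N.choose r : ℂ) * (((2 * N - r).factorial : ℂ) / (N.factorial : ℂ)) *
    (∏ i ∈ range r, ((N : ℂ) - (m' : ℂ) - (i : ℂ))) *
    (∏ i ∈ range r, (lam + (a : ℂ) - (N : ℂ) - 1 + (i : ℂ)))

/-- `α(λ,N,a,m')`. -/
def alphaF (lam : ℂ) (N : ℕ) (a m' : ℤ) : ℂ :=
  ∑ r ∈ range (N + 1), (-1 : ℂ) ^ r * C0r lam N a m' r *
    ∏ i ∈ range (N - r), ((((a + m') / 2 : ℤ) : ℂ) - ((i : ℂ) + 1))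

/-- `β(λ,N,a,m')`. -/
def betaF (lam : ℂ) (N : ℕ) (a m' : ℤ) : ℂ :=
  ∑ r ∈ range (N + 1), (-1 : ℂ) ^ r * C0r lam N a m' r *
    ∏ i ∈ range (N - r), ((((a + m' + 2) / 2 : ℤ) : ℂ) - ((i : ℂ) + 1))

/-- The polynomial function `P(λ)`. -/
def Pf (N : ℕ) (a m : ℤ) (lam : ℂ) : ℂ :=
  (lam + (((a + m - 1) / 2 : ℤ) : ℂ)) * (((a + m) / 2 : ℤ) : ℂ) *
      alphaF lam N a m * betaF lam N a (-m)
    - (lam + (((a - m - 1) / 2 : ℤ) : ℂ)) * (((a - m) / 2 : ℤ) : ℂ) *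
      alphaF lam N a (-m) * betaF lam N a m

/-- The polynomial function `Q(λ)`. -/
def Qf (N : ℕ) (a m : ℤ) (lam : ℂ) : ℂ :=
  (∏ i ∈ range (N + 1), ((m : ℂ) + (i : ℂ))) *
    (∏ i ∈ range N, (((i : ℂ) + 1) - (m : ℂ))) *
    ∏ q ∈ range (2 * N + 1), (lam - (N : ℂ) - 1 + (a : ℂ) + (q : ℂ))

/-- `α̃(a,m')`. -/
def alphaTilde (N q : ℕ) (a m' : ℤ) : ℂ :=
  ∑ r ∈ range (min q N + 1),
    (N.choose r : ℂ) * (((2 * N - r).factorial : ℂ) / ((2 * N - q).factorial : ℂ)) *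
      ((q.factorial : ℂ) / ((q - r).factorial : ℂ)) *
      (∏ i ∈ range r, ((N : ℂ) - (m' : ℂ) - (i : ℂ))) *
      (∏ i ∈ Finset.Ico r q, ((((a + m') / 2 : ℤ) : ℂ) - (N : ℂ) + (i : ℂ)))

/-- The explicit generating tuple of `Ξ(λ,a,N,m)` of Theorem 4.3 (statement 1). -/
def F1 (N a : ℕ) (m q : ℤ) : ℤ → ℂ[X] := fun j =>
  let lamz : ℤ := (N : ℤ) + 1 - a - q
  let nuz : ℤ := (N : ℤ) + 1 - q
  let lam : ℂ := (lamz : ℂ)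
  if 1 ≤ j ∧ j ≤ (N : ℤ) then
    C (Complex.I ^ (-j) * (-1 : ℂ) ^ (nuz - 1)) *
      ∑ r ∈ range (N - j.toNat + 1),
        C ((-1 : ℂ) ^ r * Acoef N m lamz nuz (N - j.toNat) r) *
          gegenCit (lam + (N : ℂ) - 1 - (r : ℂ))
            ((a : ℤ) - m + j + 2 * (1 - (N : ℤ) - nuz + (r : ℤ)))
  else if -(N : ℤ) ≤ j ∧ j ≤ 0 then
    C (Complex.I ^ j) *
      ∑ r ∈ range (N - (-j).toNat + 1),
        C ((-1 : ℂ) ^ r * Bcoef N m lamz nuz (N + (-j).toNat) r) *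
          gegenCit (lam + (N : ℂ) - 1 - (r : ℂ))
            ((a : ℤ) - m + (-j) - 2 * (N : ℤ) + 2 * (r : ℤ))
  else 0

/-- The explicit tuple of statement 16. -/
def F16 (N a : ℕ) (m q : ℤ) : ℤ → ℂ[X] := fun j =>
  let lam : ℂ := (N : ℂ) + 1 - (a : ℂ) - (q : ℂ)
  if 1 ≤ j ∧ j ≤ (N : ℤ) then
    C ((-Complex.I) ^ j.toNat * (((N + j.toNat).factorial : ℂ) / (N.factorial : ℂ)) *
        gratio (lam + ((((a : ℤ) - m - 1) / 2 : ℤ) : ℂ))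
          (((a : ℤ) - m + j - 1) / 2 + q - (N : ℤ) - ((a : ℤ) - m - 1) / 2)) *
      ∑ r ∈ range (N - j.toNat + 1),
        C (Dc N m q j.toNat r) *
          gegenCit (lam + (N : ℂ) - 1 - (r : ℂ))
            ((a : ℤ) - m + j + 2 * (q - 2 * (N : ℤ) + (r : ℤ)))
  else if -(N : ℤ) ≤ j ∧ j ≤ 0 then
    C (Complex.I ^ (-j).toNat * (((N + (-j).toNat).factorial : ℂ) / (N.factorial : ℂ)) *
        gratio (lam + ((((a : ℤ) - m - 1) / 2 : ℤ) : ℂ))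
          (((a : ℤ) - m + (-j) - 1) / 2 - ((a : ℤ) - m - 1) / 2)) *
      ∑ r ∈ range (N - (-j).toNat + 1),
        C (Cm lam a N m (-j).toNat r) *
          gegenCit (lam + (N : ℂ) - 1 - (r : ℂ))
            ((a : ℤ) - m - 2 * (N : ℤ) + (-j) + 2 * (r : ℤ))
  else 0

lemma lam_ne (lam : ℂ) (hlam : lam ∉ Set.range ((↑) : ℤ → ℂ)) (s : ℤ) :
    lam + (s : ℂ) ≠ 0 := fun h => hlam ⟨-s, by push_cast; linear_combination -h⟩

lemma coeff_euler (f : ℂ[X]) (n : ℕ) : (euler f).coeff n = (n : ℂ) * f.coeff n := by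
  unfold euler
  cases n with
  | zero => simp
  | succ k => rw [coeff_X_mul, coeff_derivative]; push_cast; ring

lemma coeff_gegenS (μ : ℂ) (ℓ : ℤ) (f : ℂ[X]) (n : ℕ) :
    (gegenS μ ℓ f).coeff n
      = ((ℓ:ℂ) - n) * ((ℓ:ℂ) + n + 2*μ) * f.coeff n
        - ((n:ℂ)+1) * ((n:ℂ)+2) * f.coeff (n+2) := by
  unfold gegenS
  rw [show (1 + 2 * C μ : ℂ[X]) * X * derivative f = C (1 + 2*μ) * (X^1 * derivative f) by
    simp [map_add, map_mul, map_ofNat]; ring]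
  simp only [coeff_neg, coeff_sub, coeff_add, add_mul, one_mul, coeff_C_mul,
    coeff_X_pow_mul', coeff_derivative]
  match n with
  | 0 => norm_num; ring
  | 1 => norm_num; ring
  | (k+2) =>
    rw [if_pos (by omega : (2:ℕ) ≤ k+2), if_pos (by omega : (1:ℕ) ≤ k+2)]
    simp only [Nat.add_sub_cancel, show k+2-1 = k+1 from rfl, coeff_derivative]
    push_cast; ring

lemma poly_zero (f : ℂ[X]) (c : ℕ → ℂ)
    (heq : ∀ n, c n * f.coeff n = ((n:ℂ)+1)*((n:ℂ)+2) * f.coeff (n+2))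
    (hc : ∀ n, f.coeff n ≠ 0 → c n ≠ 0) : f = 0 := by
  by_contra hf
  have h2 : f.coeff (f.natDegree + 2) = 0 :=
    coeff_eq_zero_of_natDegree_lt (by omega)
  have h3 : f.coeff f.natDegree ≠ 0 := by
    have := Polynomial.leadingCoeff_ne_zero.mpr hf
    rwa [Polynomial.leadingCoeff] at this
  have h1 := heq f.natDegree
  rw [h2, mul_zero] at h1
  exact (hc _ h3) (by
    rcases mul_eq_zero.mp h1 with h | h
    · exact h
    · exact absurd h h3)

lemma pos_zero (a N : ℕ) (m : ℤ) (hm : (N:ℤ) < m) (lam : ℂ)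
    (hlam : lam ∉ Set.range ((↑) : ℤ → ℂ)) (j : ℤ) (h0 : 0 ≤ j) (hj : j ≤ N)
    (fj : ℂ[X]) (hpe : polEven ((a:ℤ) - m + j) fj)
    (hA : gegenS (lam + (j:ℂ) - 1) ((a:ℤ) + m - j) fj = 0) : fj = 0 := by
  set ℓ : ℤ := (a:ℤ) + m - j with hℓ
  apply poly_zero fj (fun n => ((ℓ:ℂ) - n) * ((ℓ:ℂ) + n + 2*(lam + (j:ℂ) - 1)))
  · intro n
    have := congrArg (fun p => p.coeff n) hA
    simp only [coeff_gegenS, coeff_zero] at this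
    linear_combination this
  · intro n hn
    obtain ⟨h1, s, hs⟩ := hpe n hn
    apply mul_ne_zero
    · have : ((ℓ:ℂ) - n) = ((ℓ - n : ℤ) : ℂ) := by push_cast; ring
      rw [this]
      exact_mod_cast (by omega : (ℓ - n : ℤ) ≠ 0)
    · have hcast : (a:ℂ) - (m:ℂ) + (j:ℂ) - (n:ℂ) = 2 * (s:ℂ) := by
        have := congrArg (Int.cast : ℤ → ℂ) hs
        push_cast at this ⊢; linear_combination this
      have : (ℓ:ℂ) + n + 2*(lam + (j:ℂ) - 1) = 2 * (lam + ((s + m + n - 1 : ℤ):ℂ)) := by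
        rw [hℓ]; push_cast; linear_combination hcast
      rw [this]
      exact mul_ne_zero two_ne_zero (lam_ne lam hlam _)

lemma negSide_zero (a N : ℕ) (m : ℤ) (hm : (N:ℤ) < m) (lam : ℂ)
    (hlam : lam ∉ Set.range ((↑) : ℤ → ℂ)) (j : ℤ) (h1 : 1 ≤ j) (hj : j ≤ N)
    (g gm : ℂ[X]) (hpe : polEven ((a:ℤ) - m - j) g)
    (hA : gegenS (lam + (j:ℂ) - 1) ((a:ℤ) - m - j) g
            + C (2 * ((N:ℂ) - (j:ℂ))) * derivative gm = 0)
    (hB : C (2 * (m:ℂ) * (lam + (a:ℂ) - 1)) * g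
            + C (2 * (j:ℂ)) * (C (lam - 1) * g + euler g)
            - C ((N:ℂ) - (j:ℂ)) * derivative gm = 0) : g = 0 := by
  apply poly_zero g (fun n => ((((a:ℤ) - m - j : ℤ):ℂ) - n) * ((((a:ℤ) - m - j : ℤ):ℂ) + n + 2*(lam + (j:ℂ) - 1))
    + 4*(m:ℂ)*(lam + (a:ℂ) - 1) + 4*(j:ℂ)*((lam - 1) + (n:ℂ)))
  · intro n
    have t1 := congrArg (fun p => p.coeff n) hA
    have t2 := congrArg (fun p => p.coeff n) hB
    simp only [coeff_add, coeff_sub, coeff_C_mul, coeff_gegenS, coeff_euler,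
      coeff_zero] at t1 t2
    linear_combination t1 + 2 * t2
  · intro n hn
    obtain ⟨hle, u, hu⟩ := hpe n hn
    have hcast : (a:ℂ) - (m:ℂ) - (j:ℂ) - (n:ℂ) = 2 * (u:ℂ) := by
      have := congrArg (Int.cast : ℤ → ℂ) hu
      push_cast at this ⊢; linear_combination this
    have key : ((((a:ℤ) - m - j : ℤ):ℂ) - n) * ((((a:ℤ) - m - j : ℤ):ℂ) + n + 2*(lam + (j:ℂ) - 1))
        + 4*(m:ℂ)*(lam + (a:ℂ) - 1) + 4*(j:ℂ)*((lam - 1) + (n:ℂ))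
        = 4 * ((u + m + j : ℤ):ℂ) * (lam + ((a - 1 - u - j : ℤ):ℂ)) := by
      push_cast
      linear_combination ((n:ℂ) + ((a:ℂ) - m - j) - 2*u + 2*lam - 2*(j:ℂ) - 2) * hcast
    rw [key]
    refine mul_ne_zero (mul_ne_zero (by norm_num) ?_) (lam_ne lam hlam _)
    exact_mod_cast (by omega : (u + m + j : ℤ) ≠ 0)

/-- if `m > N` and `λ ∉ ℤ`, then `Ξ(λ,a,N,m) = {0}`. -/
theorem stmt2 (a N : ℕ) (m : ℤ) (hm : (N : ℤ) < m) (lam : ℂ)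
    (hlam : lam ∉ Set.range ((↑) : ℤ → ℂ)) :
    XiSet lam a N m = {0} := by
  ext f
  simp only [Set.mem_singleton_iff, XiSet, Set.mem_setOf_eq]
  constructor
  · rintro ⟨hsupp, hpe, hAp, hAm, _hBp, hBm⟩
    have pos : ∀ d : ℕ, (d:ℤ) ≤ N → f ((N:ℤ) - d) = 0 := by
      intro d
      induction d with
      | zero =>
        intro _
        have hnext : f ((N:ℤ) - 0 + 1) = 0 := by
          apply hsupp; rw [abs_of_nonneg (by omega)]; omega
        have hA := hAp ((N:ℤ) - 0) (by omega) (by omega)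
        rw [hnext] at hA
        simp only [derivative_zero, mul_zero, sub_zero] at hA
        exact pos_zero a N m hm lam hlam _ (by omega) (by omega) _
          (hpe _ (by rw [abs_of_nonneg (by omega)]; omega)) hA
      | succ d ih =>
        intro hd
        have hnext : f ((N:ℤ) - (d+1:ℕ) + 1) = 0 := by
          have := ih (by omega)
          convert this using 2; push_cast; ring
        have hA := hAp ((N:ℤ) - (d+1:ℕ)) (by push_cast; omega) (by push_cast; omega)
        rw [hnext] at hA
        simp only [derivative_zero, mul_zero, sub_zero] at hA
        exact pos_zero a N m hm lam hlam _ (by push_cast; omega) (by push_cast; omega) _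
          (hpe _ (by rw [abs_of_nonneg (by push_cast; omega)]; push_cast; omega)) hA
    have posZ : ∀ j : ℤ, 0 ≤ j → j ≤ (N:ℤ) → f j = 0 := by
      intro j h0 hN
      have h := pos (N - j.toNat) (by omega)
      rwa [show ((N:ℤ) - ((N - j.toNat : ℕ) : ℤ)) = j by omega] at h
    have negZ : ∀ j : ℕ, (j:ℤ) ≤ N → f (-(j:ℤ)) = 0 := by
      intro j
      induction j with
      | zero => intro _; simpa using posZ 0 le_rfl (by omega)
      | succ d ih =>
        intro hd
        have hprev : f (-(((d:ℕ)+1:ℕ):ℤ) + 1) = 0 := by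
          have := ih (by omega)
          convert this using 2; push_cast; ring
        have hA := hAm ((d:ℕ)+1:ℕ) (by push_cast; omega) (by push_cast; omega)
        have hB := hBm ((d:ℕ)+1:ℕ) (by push_cast; omega) (by push_cast; omega)
        rw [hprev] at hB
        simp only [derivative_zero, mul_zero, sub_zero] at hB
        exact negSide_zero a N m hm lam hlam _ (by push_cast; omega) (by push_cast; omega)
          _ _ (hpe _ (by rw [abs_neg, abs_of_nonneg (by push_cast; omega)]; push_cast; omega))
          hA hB
    funext j
    show f j = 0
    rcases le_or_gt (|j|) (N:ℤ) with h | h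
    · rcases le_or_gt 0 j with h0 | h0
      · exact posZ j h0 (by rwa [abs_of_nonneg h0] at h)
      · have habs : |j| = -j := abs_of_neg h0
        rw [habs] at h
        have := negZ (-j).toNat (by omega)
        rwa [show (-((-j).toNat : ℤ)) = j by omega] at this
    · exact hsupp j h
  · rintro rfl
    refine ⟨fun j _ => rfl, fun j _ => ?_, fun j _ _ => ?_, fun j _ _ => ?_,
      fun j _ _ => ?_, fun j _ _ => ?_⟩
    · intro n hn; simp at hn
    all_goals simp [gegenS, euler]
end
end

section
/- Let a, N ∈ ℕ and m ∈ ℤ with m > N and a ≥ m−N, let λ ∈ ℂ, and suppose that γ(λ+N-1, a+m-N-s) = 0 for some s ∈ {1,…,N}. If f_0, …, f_N ∈ ℂ[t] satisfy f_j ∈ Pol_{a-m+j}[t]_even for all 0 ≤ j ≤ N and (with the convention f_{N+1} := 0) the equations (A_j^+) for all 0 ≤ j ≤ N and (B_j^+) for all 1 ≤ j ≤ N, then f_N = f_{N-1} = ⋯ = f_{N-s+1} = 0. -/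
noncomputable section

open Polynomial Finset

lemma coeff_one_add_X_sq_mul' (g : ℂ[X]) (d : ℕ) :
    ((1 + X ^ 2) * g).coeff d = g.coeff d + (if 2 ≤ d then g.coeff (d - 2) else 0) := by
  rw [add_mul, one_mul, mul_comm, coeff_add, coeff_mul_X_pow']

lemma coeff_aux2' (μ : ℂ) (g : ℂ[X]) (d : ℕ) :
    ((1 + 2 * C μ) * X * g).coeff d = (1 + 2 * μ) * (X * g).coeff d := by
  have : (1 + 2 * C μ) * X * g = C (1 + 2 * μ) * (X * g) := by
    rw [mul_assoc]; congr 1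
    rw [C_add, C_mul, C_1, map_ofNat]
  rw [this, coeff_C_mul]

lemma gegen_kernel_zero (μ : ℂ) (ℓ : ℤ) (f : ℂ[X]) (h : gegenS μ ℓ f = 0)
    (hne : ∀ n : ℕ, f.coeff n ≠ 0 → ((ℓ : ℂ) - n) * ((ℓ : ℂ) + n + 2 * μ) ≠ 0) :
    f = 0 := by
  by_contra hf
  set n := f.natDegree with hn
  have hc : f.coeff n ≠ 0 := by
    rw [hn, ← leadingCoeff]; exact leadingCoeff_ne_zero.mpr hf
  have h0 : (gegenS μ ℓ f).coeff n = 0 := by rw [h, coeff_zero]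
  have e1 : (derivative (derivative f)).coeff n = 0 := by
    rw [coeff_derivative, coeff_derivative,
      coeff_eq_zero_of_natDegree_lt (by omega : f.natDegree < n + 1 + 1)]
    ring
  rw [gegenS] at h0
  simp only [coeff_neg, coeff_add, coeff_sub, coeff_C_mul, neg_eq_zero,
    coeff_one_add_X_sq_mul', coeff_aux2', e1] at h0
  have key : ((ℓ : ℂ) - n) * ((ℓ : ℂ) + n + 2 * μ) * f.coeff n = 0 := by
    rcases n with _ | _ | k
    · norm_num [mul_coeff_zero] at h0
      push_cast
      rcases h0 with (h | h) | h
      · simp [h]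
      · linear_combination (ℓ : ℂ) * f.coeff 0 * h
      · simp [h]
    · norm_num [coeff_X_mul, coeff_derivative] at h0
      push_cast
      linear_combination -h0
    · have h2 : 2 ≤ k + 2 := by omega
      rw [if_pos h2] at h0
      have hx : (X * derivative f).coeff (k + 2) = f.coeff (k + 2) * (k + 2) := by
        rw [coeff_X_mul, coeff_derivative]; push_cast; ring
      have hy : (derivative (derivative f)).coeff (k + 2 - 2) =
          f.coeff (k + 2) * (k + 2) * (k + 1) := by
        show (derivative (derivative f)).coeff k = _
        rw [coeff_derivative, coeff_derivative]; push_cast; ring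
      rw [hx, hy] at h0
      push_cast
      linear_combination -h0
  exact hne n hc ((mul_eq_zero.mp key).resolve_right hc)

/-- if `γ(λ+N-1, a+m-N-s) = 0` for some `1 ≤ s ≤ N`, then any solution
`f_0,…,f_N` of the `+`-side system satisfies `f_N = ⋯ = f_{N-s+1} = 0`. -/
theorem stmt4 (lam : ℂ) (a N : ℕ) (m : ℤ) (hm : (N : ℤ) < m) (ha : m - (N : ℤ) ≤ (a : ℤ))
    (s : ℕ) (hs1 : 1 ≤ s) (hs2 : s ≤ N)
    (hgam : gam (lam + (N : ℂ) - 1) ((a : ℤ) + m - (N : ℤ) - (s : ℤ)) = 0)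
    (f : ℕ → ℂ[X]) (hzero : f (N + 1) = 0)
    (hpol : ∀ j : ℕ, j ≤ N → polEven ((a : ℤ) - m + (j : ℤ)) (f j))
    (hA : ∀ j : ℕ, j ≤ N →
      gegenS (lam + (j : ℂ) - 1) ((a : ℤ) + m - (j : ℤ)) (f j)
        - C (2 * ((N : ℂ) - (j : ℂ))) * derivative (f (j + 1)) = 0)
    (hB : ∀ j : ℕ, 1 ≤ j → j ≤ N →
      C (2 * (-(m : ℂ)) * (lam + (a : ℂ) - 1)) * f j
        + C (2 * (j : ℂ)) * (C (lam - 1) * f j + euler (f j))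
        + C ((N : ℂ) - (j : ℂ)) * derivative (f (j + 1))
        + C ((N : ℂ) + (j : ℂ)) * derivative (f (j - 1)) = 0) :
    ∀ j : ℕ, (N : ℤ) - (s : ℤ) + 1 ≤ (j : ℤ) → j ≤ N → f j = 0 := by
  have hpar : ((a : ℤ) + m - (N : ℤ) - (s : ℤ)) % 2 = 0 := by
    by_contra hpar
    rw [gam, if_neg hpar] at hgam
    exact one_ne_zero hgam
  rw [gam, if_pos hpar] at hgam
  set e : ℤ := ((a : ℤ) + m - (N : ℤ) - (s : ℤ)) / 2 with he
  have he2 : 2 * e = (a : ℤ) + m - (N : ℤ) - (s : ℤ) := by omega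
  have he2c : (2 : ℂ) * (e : ℂ) = (a : ℂ) + (m : ℂ) - (N : ℂ) - (s : ℂ) := by
    exact_mod_cast he2
  have hlam : lam = 1 - (N : ℂ) - (e : ℂ) := by linear_combination hgam
  have key : ∀ k : ℕ, k < s → f (N - k) = 0 := by
    intro k
    induction k using Nat.strong_induction_on with
    | _ k ih =>
      intro hk
      have hnext : f (N - k + 1) = 0 := by
        cases k with
        | zero => simpa using hzero
        | succ k' =>
          have h1 : N - (k' + 1) + 1 = N - k' := by omega
          rw [h1]; exact ih k' (by omega) (by omega)
      have hA' := hA (N - k) (by omega)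
      rw [hnext, derivative_zero, mul_zero, sub_zero] at hA'
      refine gegen_kernel_zero _ _ _ hA' ?_
      intro n hcn
      obtain ⟨hle, -⟩ := hpol (N - k) (by omega) n hcn
      apply mul_ne_zero
      · intro h0
        have hz : ((a : ℤ) + m - ((N - k : ℕ) : ℤ)) - (n : ℤ) = 0 := by exact_mod_cast h0
        omega
      · intro h0
        rw [hlam] at h0
        push_cast [Nat.cast_sub (show k ≤ N by omega)] at h0
        have hz : (((n : ℤ) + (s : ℤ) - (k : ℤ) : ℤ) : ℂ) = 0 := by
          push_cast
          linear_combination h0 + he2c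
        have hz' : (n : ℤ) + (s : ℤ) - (k : ℤ) = 0 := by exact_mod_cast hz
        omega
  intro j hj1 hj2
  have hj : j = N - (N - j) := by omega
  rw [hj]
  exact key (N - j) (by omega)
end
end

section
/- Let N ∈ ℕ and m, a ∈ ℤ with m > N and a ≥ m+2N+2. Then P(λ) = Q(λ) for every λ ∈ ℂ (equivalently, P and Q coincide as polynomials in λ). -/
noncomputable section

open Polynomial Finset

namespace S10

def dd (N : ℕ) (x m : ℂ) (k : ℕ) : ℂ :=
  (-1 : ℂ) ^ (N - k) * (N.choose k : ℂ) * (∏ i ∈ range k, ((N : ℂ) + 1 + i)) *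
    (∏ i ∈ range (N - k), ((N : ℂ) - m - i)) * (∏ i ∈ range (N - k), (x + i))

def pp (k : ℕ) (s : ℂ) : ℂ := ∏ i ∈ range k, (s - 1 - i)

def AF (N : ℕ) (x m : ℂ) (s : ℂ) : ℂ := ∑ k ∈ range (N + 3), dd N x m k * pp k s

def aP (N : ℕ) (x m : ℂ) (s : ℂ) : ℂ :=
  -s ^ 2 + (x + N - 2 + m) * s + (1 - m) * (x + N - 1)

def bP (N : ℕ) (x m : ℂ) (s : ℂ) : ℂ :=
  -2 * s + (1 - m) * (x + N - 1) + N * (N + 1)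

def KF (N : ℕ) (x m : ℂ) (s : ℂ) : ℂ :=
  (x + N - (s - m)) * s * AF N x m s * AF N x (-m) (s - m + 1)
    - (x + N - s) * (s - m) * AF N x (-m) (s - m) * AF N x m (s + 1)

lemma pp_succ (k : ℕ) (s : ℂ) : pp (k + 1) s = pp k s * (s - 1 - k) :=
  prod_range_succ _ _

lemma pp_shift (k : ℕ) (s : ℂ) : pp (k + 1) (s + 1) = s * pp k s := by
  unfold pp
  rw [prod_range_succ']
  rw [show (s + 1 - 1 - ((0 : ℕ) : ℂ)) = s by push_cast; ring, mul_comm]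
  congr 1
  exact Finset.prod_congr rfl fun i _ => by push_cast; ring

lemma dd_eq_zero (N : ℕ) (x m : ℂ) {k : ℕ} (h : N < k) : dd N x m k = 0 := by
  unfold dd
  rw [Nat.choose_eq_zero_of_lt h]
  simp

lemma star (N : ℕ) (x m : ℂ) (j : ℕ) :
    ((N : ℂ) - j) * ((N : ℂ) + j + 1) * dd N x m j
      + ((j : ℂ) + 1) * ((j : ℂ) + 1 - m) * (x + (N : ℂ) - (j : ℂ) - 1) * dd N x m (j + 1)
      = 0 := by
  rcases lt_trichotomy j N with h | h | h
  · obtain ⟨l, rfl⟩ : ∃ l, N = j + l + 1 := ⟨N - j - 1, by omega⟩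
    have hch : ((j + l + 1).choose (j + 1) : ℂ) * ((j : ℂ) + 1)
        = ((j + l + 1).choose j : ℂ) * ((l : ℂ) + 1) := by
      have := Nat.choose_succ_right_eq (j + l + 1) j
      have h2 : (j + l + 1) - j = l + 1 := by omega
      rw [h2] at this
      exact_mod_cast congrArg (Nat.cast : ℕ → ℂ) this
    unfold dd
    simp only [show j + l + 1 - j = l + 1 from by omega,
      show j + l + 1 - (j + 1) = l from by omega]
    rw [prod_range_succ, prod_range_succ,
      prod_range_succ (fun i : ℕ => (((j + l + 1 : ℕ) : ℂ)) + 1 + (i : ℂ)) j, pow_succ]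
    push_cast
    linear_combination (((j:ℂ) + 1 - m) * (x + ((j:ℂ) + (l:ℂ) + 1) - (j:ℂ) - 1) * (-1:ℂ) ^ l *
      (∏ i ∈ range j, ((j:ℂ) + (l:ℂ) + 1 + 1 + (i:ℂ))) *
      (∏ i ∈ range l, ((j:ℂ) + (l:ℂ) + 1 - m - (i:ℂ))) *
      (∏ i ∈ range l, (x + (i:ℂ))) * ((j:ℂ) + (l:ℂ) + 1 + 1 + (j:ℂ))) * hch
  · rw [dd_eq_zero N x m (show N < j + 1 by omega), h, sub_self]
    ring
  · rw [dd_eq_zero N x m h, dd_eq_zero N x m (by omega : N < j + 1)]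
    ring


/-- coefficient `e1`. -/
def e1 (N : ℕ) (x m : ℂ) (k : ℕ) : ℂ :=
  ((k : ℂ) - m) * (x + N - k) + ((N : ℂ) - k) * ((N : ℂ) + k + 1)
def e2 (N : ℕ) (x m : ℂ) (k : ℕ) : ℂ := ((k : ℂ) - m) * (x + N - k)

lemma phi (N : ℕ) (x m : ℂ) (k : ℕ) (s : ℂ) :
    aP N x m s * pp k (s + 2) + (bP N x m s - 2 * aP N x m s) * pp k (s + 1)
      + (aP N x m s - bP N x m s + N * (N + 1)) * pp k s
    = ((N : ℂ) - k) * ((N : ℂ) + k + 1) * pp k s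
      + (k : ℂ) * e1 N x m k * pp (k - 1) s
      + (k : ℂ) * ((k : ℂ) - 1) * e2 N x m k * pp (k - 2) s := by
  match k with
  | 0 =>
    unfold aP bP e1 e2 pp
    simp only [prod_range_zero, Nat.cast_zero]
    ring
  | 1 =>
    unfold aP bP e1 e2 pp
    simp only [prod_range_one, prod_range_zero, Nat.cast_one, Nat.cast_zero]
    push_cast
    ring
  | (k + 2) =>
    have h2 : pp (k + 2) (s + 2) = (s + 1) * (s * pp k s) := by
      rw [show s + 2 = (s + 1) + 1 by ring, pp_shift, pp_shift]
    have h1 : pp (k + 2) (s + 1) = s * (pp k s * (s - 1 - k)) := by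
      rw [pp_shift, pp_succ]
    have h0 : pp (k + 2) s = (pp k s * (s - 1 - k)) * (s - 1 - ((k + 1 : ℕ) : ℂ)) := by
      rw [pp_succ, pp_succ]
    have hm1 : pp (k + 2 - 1) s = pp k s * (s - 1 - k) := pp_succ k s
    have hm2 : pp (k + 2 - 2) s = pp k s := rfl
    rw [h2, h1, h0, hm1, hm2]
    unfold aP bP e1 e2
    push_cast
    ring

lemma sum_shift1 (M : ℕ) (f : ℕ → ℂ) (h0 : f 0 = 0) (hM : f (M + 1) = 0) :
    ∑ k ∈ range (M + 1), f k = ∑ k ∈ range (M + 1), f (k + 1) := by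
  rw [Finset.sum_range_succ' f M, h0, add_zero, Finset.sum_range_succ (fun k => f (k + 1)) M, hM,
    add_zero]

lemma recc (N : ℕ) (x m : ℂ) (s : ℂ) :
    aP N x m s * AF N x m (s + 2) + (bP N x m s - 2 * aP N x m s) * AF N x m (s + 1)
      + (aP N x m s - bP N x m s + N * (N + 1)) * AF N x m s = 0 := by
  unfold AF
  rw [Finset.mul_sum, Finset.mul_sum, Finset.mul_sum, ← Finset.sum_add_distrib,
    ← Finset.sum_add_distrib]
  have key : ∀ k ∈ range (N + 3),
      aP N x m s * (dd N x m k * pp k (s + 2)) + (bP N x m s - 2 * aP N x m s) * (dd N x m k * pp k (s + 1))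
        + (aP N x m s - bP N x m s + N * (N + 1)) * (dd N x m k * pp k s)
      = dd N x m k * (((N : ℂ) - k) * ((N : ℂ) + k + 1)) * pp k s
        + dd N x m k * ((k : ℂ) * e1 N x m k) * pp (k - 1) s
        + dd N x m k * ((k : ℂ) * ((k : ℂ) - 1) * e2 N x m k) * pp (k - 2) s := by
    intro k _
    linear_combination dd N x m k * phi N x m k s
  rw [Finset.sum_congr rfl key, Finset.sum_add_distrib, Finset.sum_add_distrib]
  have hS1 : ∑ k ∈ range (N + 3), dd N x m k * ((k : ℂ) * e1 N x m k) * pp (k - 1) s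
      = ∑ k ∈ range (N + 3), dd N x m (k + 1) * (((k : ℂ) + 1) * e1 N x m (k + 1)) * pp k s := by
    rw [sum_shift1 (N + 2) _ (by simp) (by rw [dd_eq_zero N x m (by omega : N < N + 3)]; ring)]
    refine Finset.sum_congr rfl fun k _ => ?_
    rw [show k + 1 - 1 = k from by omega]
    push_cast
    ring
  have hS2 : ∑ k ∈ range (N + 3), dd N x m k * ((k : ℂ) * ((k : ℂ) - 1) * e2 N x m k) * pp (k - 2) s
      = ∑ k ∈ range (N + 3), dd N x m (k + 2) * (((k : ℂ) + 2) * ((k : ℂ) + 1) * e2 N x m (k + 2)) * pp k s := by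
    rw [sum_shift1 (N + 2) _ (by simp) (by rw [dd_eq_zero N x m (by omega : N < N + 3)]; ring)]
    rw [sum_shift1 (N + 2) _ (by push_cast; ring) (by rw [dd_eq_zero N x m (by omega : N < N + 4)]; ring)]
    refine Finset.sum_congr rfl fun k _ => ?_
    rw [show k + 1 + 1 - 2 = k from by omega]
    push_cast
    ring
  rw [hS1, hS2, ← Finset.sum_add_distrib, ← Finset.sum_add_distrib]
  refine Finset.sum_eq_zero fun k _ => ?_
  have s1 := star N x m k
  have s2 := star N x m (k + 1)
  push_cast at s2
  unfold e1 e2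
  push_cast
  linear_combination pp k s * s1 + pp k s * ((k : ℂ) + 1) * s2

set_option maxHeartbeats 1000000 in
set_option maxRecDepth 4000 in
lemma step (N : ℕ) (x m : ℂ) (s : ℂ) :
    aP N x m s * aP N x (-m) (s - m) * (KF N x m (s + 1) - KF N x m s) = 0 := by
  have hA := recc N x m s
  have hB := recc N x (-m) (s - m)
  unfold KF
  rw [show s + 1 + 1 = s + 2 from by ring, show s + 1 - m + 1 = s - m + 2 from by ring,
    show s + 1 - m = s - m + 1 from by ring]
  unfold aP bP at hA hB
  unfold aP
  set A0 := AF N x m s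
  set A1 := AF N x m (s + 1)
  set A2 := AF N x m (s + 2)
  set B0 := AF N x (-m) (s - m)
  set B1 := AF N x (-m) (s - m + 1)
  set B2 := AF N x (-m) (s - m + 2)
  linear_combination ((x + (N : ℂ) - (s - m + 1)) * (s + 1) *
      (-(s : ℂ) ^ 2 + (x + N - 2 + m) * s + (1 - m) * (x + N - 1)) * A1) * hB
    - ((x + (N : ℂ) - (s + 1)) * (s - m + 1) *
      (-(s - m) ^ 2 + (x + N - 2 + -m) * (s - m) + (1 - -m) * (x + N - 1)) *
      B1) * hA

lemma contAF (N : ℕ) (x m : ℂ) : Continuous (AF N x m) := by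
  unfold AF pp
  exact continuous_finset_sum _ fun k _ => Continuous.mul continuous_const
    (continuous_finset_prod _ fun i _ => by fun_prop)

lemma contKF (N : ℕ) (x m : ℂ) : Continuous (KF N x m) := by
  unfold KF
  have h1 := contAF N x m
  have h2 := contAF N x (-m)
  fun_prop

lemma KF_step_all (N : ℕ) (x m : ℂ) (s : ℂ) : KF N x m (s + 1) = KF N x m s := by
  have hdense : Dense ({m - 1, x + N - 1, -1, x + N + m - 1} : Set ℂ)ᶜ :=
    (Set.toFinite _).countable.dense_compl ℂ
  have heq : Set.EqOn (fun s => KF N x m (s + 1)) (fun s => KF N x m s)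
      ({m - 1, x + N - 1, -1, x + N + m - 1} : Set ℂ)ᶜ := by
    intro u hu
    simp only [Set.mem_compl_iff, Set.mem_insert_iff, Set.mem_singleton_iff, not_or] at hu
    obtain ⟨h1, h2, h3, h4⟩ := hu
    have ha : aP N x m u ≠ 0 := by
      rw [show aP N x m u = -((u - (m - 1)) * (u - (x + N - 1))) from by unfold aP; ring]
      exact neg_ne_zero.2 (mul_ne_zero (sub_ne_zero.2 h1) (sub_ne_zero.2 h2))
    have hb : aP N x (-m) (u - m) ≠ 0 := by
      rw [show aP N x (-m) (u - m) = -((u - -1) * (u - (x + N + m - 1))) from by unfold aP; ring]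
      exact neg_ne_zero.2 (mul_ne_zero (sub_ne_zero.2 h3) (sub_ne_zero.2 h4))
    have := step N x m u
    have hmn := mul_ne_zero ha hb
    simp only []
    exact sub_eq_zero.1 ((mul_eq_zero.1 this).resolve_left hmn)
  have := Continuous.ext_on hdense ((contKF N x m).comp (by fun_prop)) (contKF N x m) heq
  exact congrFun this s

lemma KF_nat (N : ℕ) (x m : ℂ) (n : ℕ) : KF N x m n = KF N x m 0 := by
  induction n with
  | zero => norm_num
  | succ n ih => rw [show ((n + 1 : ℕ) : ℂ) = (n : ℂ) + 1 by push_cast; ring, KF_step_all]; exact ih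

lemma vdm (n : ℕ) (x y : ℂ) :
    ∑ r ∈ range (n + 1), (n.choose r : ℂ) * (∏ i ∈ range r, (x + i)) *
        (∏ i ∈ range (n - r), (y + i))
      = ∏ i ∈ range n, (x + y + i) := by
  induction n generalizing y with
  | zero => simp
  | succ n ih =>
    rw [Finset.sum_range_succ' _ (n + 1)]
    have e0 : ((n + 1).choose 0 : ℂ) * (∏ i ∈ range 0, (x + i)) *
        (∏ i ∈ range (n + 1 - 0), (y + i)) = ∏ i ∈ range (n + 1), (y + i) := by simp
    rw [e0]
    have esplit : ∀ i ∈ range (n + 1),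
        ((n + 1).choose (i + 1) : ℂ) * (∏ j ∈ range (i + 1), (x + j)) *
          (∏ j ∈ range (n + 1 - (i + 1)), (y + j))
        = (n.choose i : ℂ) * (∏ j ∈ range (i + 1), (x + j)) * (∏ j ∈ range (n - i), (y + j))
          + (n.choose (i + 1) : ℂ) * (∏ j ∈ range (i + 1), (x + j)) *
            (∏ j ∈ range (n - i), (y + j)) := by
      intro i _
      rw [show n + 1 - (i + 1) = n - i from by omega, Nat.choose_succ_succ]
      push_cast
      ring
    rw [Finset.sum_congr rfl esplit, Finset.sum_add_distrib]
    -- second sum + f0 = T2'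
    have hT2 : (∑ i ∈ range (n + 1), (n.choose (i + 1) : ℂ) * (∏ j ∈ range (i + 1), (x + j)) *
          (∏ j ∈ range (n - i), (y + j))) + ∏ i ∈ range (n + 1), (y + i)
        = ∑ i ∈ range (n + 1), (n.choose i : ℂ) * (∏ j ∈ range i, (x + j)) *
          (∏ j ∈ range (n + 1 - i), (y + j)) := by
      rw [Finset.sum_range_succ' (fun i => (n.choose i : ℂ) * (∏ j ∈ range i, (x + j)) *
        (∏ j ∈ range (n + 1 - i), (y + j))) n]
      rw [Finset.sum_range_succ]
      simp only [Nat.choose_succ_self, Nat.cast_zero, zero_mul, add_zero, Nat.choose_zero_right,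
        Nat.cast_one, one_mul, prod_range_zero, Nat.sub_zero]
      congr 1
      refine Finset.sum_congr rfl fun i hi => ?_
      rw [show n + 1 - (i + 1) = n - i from by omega]
    rw [add_assoc, hT2]
    -- now combine two sums termwise
    have hcomb : ∀ i ∈ range (n + 1),
        (n.choose i : ℂ) * (∏ j ∈ range (i + 1), (x + j)) * (∏ j ∈ range (n - i), (y + j))
          + (n.choose i : ℂ) * (∏ j ∈ range i, (x + j)) * (∏ j ∈ range (n + 1 - i), (y + j))
        = (x + y + (n : ℂ)) * ((n.choose i : ℂ) * (∏ j ∈ range i, (x + j)) *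
            (∏ j ∈ range (n - i), (y + j))) := by
      intro i hi
      have hi' : i ≤ n := by simpa using Nat.lt_succ_iff.1 (Finset.mem_range.1 hi)
      rw [prod_range_succ, show n + 1 - i = (n - i) + 1 from by omega, prod_range_succ]
      have hc : ((n - i : ℕ) : ℂ) = (n : ℂ) - i := by
        push_cast [Nat.cast_sub hi']; ring
      rw [hc]
      ring
    rw [← Finset.sum_add_distrib, Finset.sum_congr rfl hcomb, ← Finset.mul_sum, ih,
      prod_range_succ, mul_comm]

lemma prod_reflect (n : ℕ) (z : ℂ) :
    ∏ i ∈ range n, (z - i) = ∏ i ∈ range n, (z - n + 1 + i) := by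
  induction n with
  | zero => simp
  | succ n ih =>
    rw [prod_range_succ, prod_range_succ']
    have h1 : ∀ i ∈ range n, (z - ((n + 1 : ℕ) : ℂ) + 1 + ((i + 1 : ℕ) : ℂ)) = z - n + 1 + i := by
      intro i _; push_cast; ring
    rw [Finset.prod_congr rfl h1, ← ih]
    push_cast
    ring

lemma factR (N : ℕ) : ∀ k : ℕ, (((N + k).factorial : ℂ) / (N.factorial : ℂ))
    = ∏ i ∈ range k, ((N : ℂ) + 1 + i)
  | 0 => by simp [div_self, Nat.cast_ne_zero.2 (Nat.factorial_pos N).ne']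
  | (k + 1) => by
    rw [prod_range_succ, ← factR N k, show N + (k + 1) = (N + k) + 1 from rfl,
      Nat.factorial_succ]
    push_cast
    field_simp
    ring

lemma AF_one (N : ℕ) (x m : ℂ) :
    AF N x m 1 = (-1 : ℂ) ^ N * (∏ i ∈ range N, ((N : ℂ) - m - i)) * (∏ i ∈ range N, (x + i)) := by
  unfold AF
  rw [Finset.sum_eq_single 0]
  · unfold dd pp; simp
  · intro k _ hk
    have : pp k (1 : ℂ) = 0 := by
      unfold pp
      refine Finset.prod_eq_zero (Finset.mem_range.2 (Nat.pos_of_ne_zero hk)) ?_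
      simp
    rw [this, mul_zero]
  · intro h; exact absurd (Finset.mem_range.2 (by omega)) h

lemma AF_negm (N : ℕ) (x m : ℂ) :
    AF N x (-m) (-m) = (-1 : ℂ) ^ N * (∏ i ∈ range N, (m + 1 + i)) *
      (∏ i ∈ range N, (x + (N : ℂ) + 1 + i)) := by
  unfold AF
  rw [Finset.sum_range_succ, Finset.sum_range_succ, dd_eq_zero N x (-m) (by omega : N < N + 2),
    dd_eq_zero N x (-m) (by omega : N < N + 1), zero_mul, add_zero, zero_mul, add_zero]
  have key : ∀ k ∈ range (N + 1), dd N x (-m) k * pp k (-m)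
      = ((-1 : ℂ) ^ N * ∏ i ∈ range N, (m + 1 + i)) *
        ((N.choose k : ℂ) * (∏ i ∈ range k, ((N : ℂ) + 1 + i)) * (∏ i ∈ range (N - k), (x + i))) := by
    intro k hk
    have hk' : k ≤ N := by simpa using Nat.lt_succ_iff.1 (Finset.mem_range.1 hk)
    unfold dd pp
    have hp : ∏ i ∈ range k, ((-m : ℂ) - 1 - i) = (-1 : ℂ) ^ k * ∏ i ∈ range k, (m + 1 + i) := by
      rw [show ((-1 : ℂ) ^ k) = ∏ _i ∈ range k, (-1 : ℂ) from by
          rw [Finset.prod_const, Finset.card_range], ← Finset.prod_mul_distrib]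
      exact Finset.prod_congr rfl fun i _ => by ring
    have hq : ∏ i ∈ range (N - k), ((N : ℂ) - (-m) - i) = ∏ i ∈ range (N - k), (m + 1 + k + i) := by
      have h1 : ∀ i ∈ range (N - k), ((N : ℂ) - (-m) - i) = ((N : ℂ) + m) - i :=
        fun i _ => by ring
      rw [Finset.prod_congr rfl h1, prod_reflect]
      refine Finset.prod_congr rfl fun i _ => ?_
      have : ((N - k : ℕ) : ℂ) = (N : ℂ) - k := by push_cast [Nat.cast_sub hk']; ring
      rw [this]; ring
    have hfull : (∏ i ∈ range k, (m + 1 + i)) * ∏ i ∈ range (N - k), (m + 1 + k + i)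
        = ∏ i ∈ range N, (m + 1 + i) := by
      rw [show N = k + (N - k) from by omega, Finset.prod_range_add]
      rw [show k + (N - k) = N from by omega]
      congr 1
      exact Finset.prod_congr rfl fun i _ => by push_cast; ring
    rw [hp, hq]
    have hsgn : (-1 : ℂ) ^ (N - k) * (-1 : ℂ) ^ k = (-1 : ℂ) ^ N := by
      rw [← pow_add, show N - k + k = N from by omega]
    calc (-1 : ℂ) ^ (N - k) * (N.choose k : ℂ) * (∏ i ∈ range k, ((N : ℂ) + 1 + i)) *
          (∏ i ∈ range (N - k), (m + 1 + k + i)) * (∏ i ∈ range (N - k), (x + i)) *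
          ((-1 : ℂ) ^ k * ∏ i ∈ range k, (m + 1 + i))
        = ((-1 : ℂ) ^ (N - k) * (-1 : ℂ) ^ k) *
            ((∏ i ∈ range k, (m + 1 + i)) * ∏ i ∈ range (N - k), (m + 1 + k + i)) *
            ((N.choose k : ℂ) * (∏ i ∈ range k, ((N : ℂ) + 1 + i)) *
              (∏ i ∈ range (N - k), (x + i))) := by ring
      _ = _ := by rw [hsgn, hfull]
  rw [Finset.sum_congr rfl key, ← Finset.mul_sum]
  have hv : ∑ k ∈ range (N + 1), ((N.choose k : ℂ) * (∏ i ∈ range k, ((N : ℂ) + 1 + i)) *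
      (∏ i ∈ range (N - k), (x + i))) = ∏ i ∈ range N, (x + (N : ℂ) + 1 + i) := by
    rw [vdm N ((N : ℂ) + 1) x]
    exact Finset.prod_congr rfl fun i _ => by ring
  rw [hv]

lemma alpha_AF (lam : ℂ) (N : ℕ) (a m' : ℤ) :
    alphaF lam N a m'
      = AF N (lam + (a : ℂ) - (N : ℂ) - 1) (m' : ℂ) ((((a + m') / 2 : ℤ) : ℂ)) := by
  unfold AF
  rw [Finset.sum_range_succ, Finset.sum_range_succ,
    dd_eq_zero _ _ _ (by omega : N < N + 2), dd_eq_zero _ _ _ (by omega : N < N + 1),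
    zero_mul, add_zero, zero_mul, add_zero]
  rw [← Finset.sum_range_reflect]
  unfold alphaF C0r
  refine Finset.sum_congr rfl fun r hr => ?_
  have hr' : r ≤ N := by simpa using Nat.lt_succ_iff.1 (Finset.mem_range.1 hr)
  rw [show N + 1 - 1 - r = N - r from by omega]
  unfold dd pp
  rw [show N - (N - r) = r from by omega, Nat.choose_symm hr',
    show ((2 * N - r).factorial : ℂ) = ((N + (N - r)).factorial : ℂ) from by
      rw [show N + (N - r) = 2 * N - r from by omega],
    factR N (N - r)]
  have hlast : ∏ i ∈ range (N - r), ((((a + m') / 2 : ℤ) : ℂ) - ((i : ℂ) + 1))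
      = ∏ i ∈ range (N - r), ((((a + m') / 2 : ℤ) : ℂ) - 1 - (i : ℂ)) :=
    Finset.prod_congr rfl fun i _ => by ring
  rw [hlast]
  ring

lemma beta_AF (lam : ℂ) (N : ℕ) (a m' : ℤ) :
    betaF lam N a m'
      = AF N (lam + (a : ℂ) - (N : ℂ) - 1) (m' : ℂ) ((((a + m') / 2 : ℤ) : ℂ) + 1) := by
  have h2 : ((((a + m' + 2) / 2 : ℤ)) : ℂ) = (((a + m') / 2 : ℤ) : ℂ) + 1 := by
    rw [show ((a + m' + 2) / 2 : ℤ) = (a + m') / 2 + 1 from by omega]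
    push_cast
    ring
  unfold AF
  rw [Finset.sum_range_succ, Finset.sum_range_succ,
    dd_eq_zero _ _ _ (by omega : N < N + 2), dd_eq_zero _ _ _ (by omega : N < N + 1),
    zero_mul, add_zero, zero_mul, add_zero]
  rw [← Finset.sum_range_reflect]
  unfold betaF C0r
  refine Finset.sum_congr rfl fun r hr => ?_
  have hr' : r ≤ N := by simpa using Nat.lt_succ_iff.1 (Finset.mem_range.1 hr)
  rw [show N + 1 - 1 - r = N - r from by omega]
  unfold dd pp
  rw [show N - (N - r) = r from by omega, Nat.choose_symm hr',
    show ((2 * N - r).factorial : ℂ) = ((N + (N - r)).factorial : ℂ) from by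
      rw [show N + (N - r) = 2 * N - r from by omega],
    factR N (N - r)]
  have hlast : ∏ i ∈ range (N - r), ((((a + m' + 2) / 2 : ℤ) : ℂ) - ((i : ℂ) + 1))
      = ∏ i ∈ range (N - r), ((((a + m') / 2 : ℤ) : ℂ) + 1 - 1 - (i : ℂ)) :=
    Finset.prod_congr rfl fun i _ => by rw [h2]; ring
  rw [hlast]
  ring

lemma KF_zero (N : ℕ) (x m : ℂ) :
    KF N x m 0 = m * (x + N) * AF N x (-m) (-m) * AF N x m 1 := by
  unfold KF
  rw [show (0 : ℂ) - m = -m from by ring, show (0 : ℂ) + 1 = 1 from by ring]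
  ring

lemma KF_zero_Qf (N : ℕ) (a m : ℤ) (lam : ℂ) :
    KF N (lam + (a : ℂ) - (N : ℂ) - 1) (m : ℂ) 0 = Qf N a m lam := by
  set x : ℂ := lam + (a : ℂ) - (N : ℂ) - 1 with hx
  rw [KF_zero, AF_negm, AF_one]
  unfold Qf
  -- product manipulations
  have hQ3 : ∏ q ∈ range (2 * N + 1), (lam - (N : ℂ) - 1 + (a : ℂ) + (q : ℂ))
      = (∏ i ∈ range N, (x + i)) * ((x + N) * ∏ i ∈ range N, (x + (N : ℂ) + 1 + i)) := by
    have h1 : ∏ q ∈ range (2 * N + 1), (lam - (N : ℂ) - 1 + (a : ℂ) + (q : ℂ))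
        = ∏ q ∈ range (N + (N + 1)), (x + q) := by
      rw [show 2 * N + 1 = N + (N + 1) from by omega]
      exact Finset.prod_congr rfl fun q _ => by rw [hx]; ring
    rw [h1, Finset.prod_range_add]
    rw [Finset.prod_range_succ' (fun i => (x + ((N + i : ℕ) : ℂ))) N]
    have h2 : ∏ i ∈ range N, (x + ((N + (i + 1) : ℕ) : ℂ)) = ∏ i ∈ range N, (x + (N : ℂ) + 1 + i) :=
      Finset.prod_congr rfl fun i _ => by push_cast; ring
    rw [h2, show ((N + 0 : ℕ) : ℂ) = (N : ℂ) from by push_cast; ring]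
    ring
  have hQ1 : ∏ i ∈ range (N + 1), ((m : ℂ) + (i : ℂ))
      = (m : ℂ) * ∏ i ∈ range N, ((m : ℂ) + 1 + i) := by
    rw [Finset.prod_range_succ' (fun i => ((m : ℂ) + (i : ℂ))) N]
    have h2 : ∏ i ∈ range N, ((m : ℂ) + ((i + 1 : ℕ) : ℂ)) = ∏ i ∈ range N, ((m : ℂ) + 1 + i) :=
      Finset.prod_congr rfl fun i _ => by push_cast; ring
    rw [h2, show ((0 : ℕ) : ℂ) = (0 : ℂ) from by push_cast; ring]
    ring
  have hQ2 : ∏ i ∈ range N, ((N : ℂ) - (m : ℂ) - i) = ∏ i ∈ range N, (((i : ℂ) + 1) - (m : ℂ)) := by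
    have h1 : ∀ i ∈ range N, ((N : ℂ) - (m : ℂ) - i) = ((N : ℂ) - (m : ℂ)) - i := fun i _ => by ring
    rw [Finset.prod_congr rfl h1, prod_reflect]
    exact Finset.prod_congr rfl fun i _ => by ring
  rw [hQ1, hQ2, hQ3]
  have hsgn : (-1 : ℂ) ^ N * (-1 : ℂ) ^ N = 1 := by
    rw [← pow_add, ← two_mul, pow_mul]
    norm_num
  linear_combination ((m : ℂ) * (x + (N : ℂ)) * (∏ i ∈ range N, ((m : ℂ) + 1 + i)) *
    (∏ i ∈ range N, (x + (N : ℂ) + 1 + i)) * (∏ i ∈ range N, (((i : ℂ) + 1) - (m : ℂ))) *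
    (∏ i ∈ range N, (x + i))) * hsgn


end S10

open S10 in
/-- `P = Q` (Lemma 4.10). -/
theorem stmt10 (N : ℕ) (a m : ℤ) (hm : (N : ℤ) < m) (ha : m + 2 * (N : ℤ) + 2 ≤ a) :
    ∀ lam : ℂ, Pf N a m lam = Qf N a m lam := by

  intro lam
  set x : ℂ := lam + (a : ℂ) - (N : ℂ) - 1 with hx
  set s0 : ℤ := (a + m) / 2 with hs0
  set t0 : ℤ := (a - m) / 2 with ht0
  have hts : ((t0 : ℤ) : ℂ) = ((s0 : ℤ) : ℂ) - (m : ℂ) := by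
    rw [show t0 = s0 - m from by omega]
    push_cast
    ring
  have hm1 : (((a + m - 1) / 2 : ℤ) : ℂ) = ((a : ℤ) : ℂ) - 1 - (t0 : ℂ) := by
    rw [show ((a + m - 1) / 2 : ℤ) = a - 1 - t0 from by omega]
    push_cast
    ring
  have hm2 : (((a - m - 1) / 2 : ℤ) : ℂ) = ((a : ℤ) : ℂ) - 1 - (s0 : ℂ) := by
    rw [show ((a - m - 1) / 2 : ℤ) = a - 1 - s0 from by omega]
    push_cast
    ring
  have hPK : Pf N a m lam = KF N x (m : ℂ) ((s0 : ℤ) : ℂ) := by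
    unfold Pf
    rw [alpha_AF lam N a m, alpha_AF lam N a (-m), beta_AF lam N a m, beta_AF lam N a (-m)]
    rw [show ((a + -m) / 2 : ℤ) = t0 from by omega, show ((a - m) / 2 : ℤ) = t0 from rfl,
      show ((a + m) / 2 : ℤ) = s0 from rfl]
    unfold KF
    rw [hm1, hm2, hts]
    push_cast
    ring
  have hs0nn : 0 ≤ s0 := by omega
  have hcast : ((s0 : ℤ) : ℂ) = ((s0.toNat : ℕ) : ℂ) := by
    rw [show ((s0.toNat : ℕ) : ℂ) = ((s0.toNat : ℤ) : ℂ) from by push_cast; ring,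
      Int.toNat_of_nonneg hs0nn]
  rw [hPK, hcast, KF_nat, KF_zero_Qf]
end
end

section
/- Let N ∈ ℕ, m ∈ ℤ with m > N, a ∈ ℤ with a ≥ m+2N+2, and q ∈ ℤ with 0 ≤ q ≤ 2N. Then α̃(a,m) = α̃(a,-m), where for an integer m' one sets α̃(a,m') := Σ_{r=0}^{min(q,N)} binom(N,r) ((2N-r)!/(2N-q)!) (q!/(q-r)!) (∏_{i=0}^{r-1}(N-m'-i)) (∏_{i=r}^{q-1}(⌊(a+m')/2⌋-N+i)). -/
noncomputable section

open Polynomial Finset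

namespace St11
lemma prodz (k r : ℕ) (h : k < r) : ∏ j ∈ range r, ((k : ℂ) - (j : ℂ)) = 0 :=
  Finset.prod_eq_zero (Finset.mem_range.mpr h) (by simp)
def hterm (N q : ℕ) (x y : ℂ) (r : ℕ) : ℂ :=
  (N.choose r : ℂ) * (∏ j ∈ range r, ((q : ℂ) - (j : ℂ))) *
    (∏ i ∈ Ico r q, (2 * (N : ℂ) - (i : ℂ))) *
    (∏ i ∈ range r, ((N : ℂ) + y - x - (i : ℂ))) *
    (∏ i ∈ Ico r q, (x + (i : ℂ)))
def hsum (N q : ℕ) (x y : ℂ) : ℂ := ∑ r ∈ range (N + 1), hterm N q x y r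
def Wc (N q : ℕ) (x y : ℂ) (r : ℕ) : ℂ :=
  -(r : ℂ) * (∏ j ∈ range (r - 1), ((q : ℂ) - (j : ℂ))) * (N.choose r : ℂ) *
    (∏ i ∈ Ico (r - 1) q, (2 * (N : ℂ) - (i : ℂ))) *
    (∏ i ∈ range r, ((N : ℂ) + y - x - (i : ℂ))) *
    (∏ i ∈ Ico (r - 1) q, (x + (i : ℂ)))
def Ac (N q : ℕ) (x y : ℂ) : ℂ :=
  ((N : ℂ) - (q : ℂ)) * (x + y) + (N : ℂ) ^ 2 + (2 * (N : ℂ) + 1) * (q : ℂ) - 2 * (q : ℂ) ^ 2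
def Bc (N q : ℕ) (x y : ℂ) : ℂ :=
  (q : ℂ) * (2 * (N : ℂ) + 1 - (q : ℂ)) * (x + (q : ℂ) - 1) * (y + (q : ℂ) - 1)
lemma hterm_zero (N q : ℕ) (x y : ℂ) (r : ℕ) (h : q < r) : hterm N q x y r = 0 := by
  simp [hterm, prodz q r h]
lemma key_fall (q r : ℕ) :
    ((q : ℂ) + 1 - (r : ℂ)) * ∏ j ∈ range r, ((q : ℂ) + 1 - (j : ℂ)) =
      ((q : ℂ) + 1) * ∏ j ∈ range r, ((q : ℂ) - (j : ℂ)) := by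
  have h1 := Finset.prod_range_succ (fun j : ℕ => (q : ℂ) + 1 - (j : ℂ)) r
  have h2 := Finset.prod_range_succ' (fun j : ℕ => (q : ℂ) + 1 - (j : ℂ)) r
  have h3 : (∏ j ∈ range r, ((q : ℂ) + 1 - ((j + 1 : ℕ) : ℂ))) =
      ∏ j ∈ range r, ((q : ℂ) - (j : ℂ)) :=
    Finset.prod_congr rfl (fun j _ => by push_cast; ring)
  rw [h3] at h2
  rw [show ((q : ℂ) + 1 - (r : ℂ)) * ∏ j ∈ range r, ((q : ℂ) + 1 - (j : ℂ)) =
      (∏ j ∈ range r, ((q : ℂ) + 1 - (j : ℂ))) * ((q : ℂ) + 1 - (r : ℂ)) from by ring, ← h1, h2]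
  push_cast; ring
lemma relR (N q r : ℕ) (x y : ℂ) :
    ((q : ℂ) + 1 - (r : ℂ)) * hterm N (q + 1) x y r =
      ((q : ℂ) + 1) * (2 * (N : ℂ) - (q : ℂ)) * (x + (q : ℂ)) * hterm N q x y r := by
  rcases le_or_gt r q with hr | hr
  · unfold hterm
    rw [Finset.prod_Ico_succ_top hr (fun i : ℕ => 2 * (N : ℂ) - (i : ℂ)),
      Finset.prod_Ico_succ_top hr (fun i : ℕ => x + (i : ℂ))]
    push_cast
    linear_combination ((N.choose r : ℂ) * (∏ i ∈ Ico r q, (2 * (N : ℂ) - (i : ℂ))) *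
      (∏ i ∈ range r, ((N : ℂ) + y - x - (i : ℂ))) * (∏ i ∈ Ico r q, (x + (i : ℂ))) *
      (2 * (N : ℂ) - (q : ℂ)) * (x + (q : ℂ))) * key_fall q r
  · rcases Nat.lt_or_ge (q + 1) r with hr2 | hr2
    · rw [hterm_zero N (q + 1) x y r hr2, hterm_zero N q x y r hr]; ring
    · have he : r = q + 1 := le_antisymm hr2 hr
      subst he
      rw [hterm_zero N q x y (q + 1) (Nat.lt_succ_self q)]
      push_cast
      ring
lemma chooseC (N r : ℕ) :
    ((r : ℂ) + 1) * (N.choose (r + 1) : ℂ) = (N.choose r : ℂ) * ((N : ℂ) - (r : ℂ)) := by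
  rcases le_or_gt r N with hr | hr
  · have h := Nat.choose_succ_right_eq N r
    have h' := congrArg (fun n : ℕ => (n : ℂ)) h
    push_cast [hr] at h'
    linear_combination h'
  · rw [Nat.choose_eq_zero_of_lt hr, Nat.choose_eq_zero_of_lt (Nat.lt_succ_of_lt hr)]
    simp
lemma relW1 (N q r : ℕ) (x y : ℂ) :
    ((q : ℂ) + 1 - (r : ℂ)) * Wc N q x y r =
      -(r : ℂ) * (2 * (N : ℂ) + 1 - (r : ℂ)) * (x + (r : ℂ) - 1) * hterm N q x y r := by
  cases r with
  | zero => simp [Wc]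
  | succ s =>
    rcases Nat.lt_or_ge s q with hs | hs
    · unfold Wc hterm
      simp only [Nat.add_sub_cancel]
      rw [Finset.prod_eq_prod_Ico_succ_bot hs (fun i : ℕ => 2 * (N : ℂ) - (i : ℂ)),
        Finset.prod_eq_prod_Ico_succ_bot hs (fun i : ℕ => x + (i : ℂ)),
        Finset.prod_range_succ (fun j : ℕ => (q : ℂ) - (j : ℂ))]
      push_cast
      ring
    · rcases Nat.lt_or_ge q s with hs2 | hs2
      · rw [hterm_zero N q x y (s + 1) (Nat.lt_succ_of_lt hs2)]
        unfold Wc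
        simp only [Nat.add_sub_cancel]
        rw [prodz q s hs2]
        ring
      · have : s = q := le_antisymm hs2 hs
        subst this
        rw [hterm_zero N s x y (s + 1) (Nat.lt_succ_self s)]
        push_cast
        ring
lemma relW2 (N q r : ℕ) (x y : ℂ) :
    Wc N q x y (r + 1) =
      -((N : ℂ) - (r : ℂ)) * ((N : ℂ) + y - x - (r : ℂ)) * hterm N q x y r := by
  unfold Wc hterm
  simp only [Nat.add_sub_cancel]
  rw [Finset.prod_range_succ (fun i : ℕ => (N : ℂ) + y - x - (i : ℂ))]
  push_cast
  linear_combination (-(∏ j ∈ range r, ((q : ℂ) - (j : ℂ))) *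
    (∏ i ∈ Ico r q, (2 * (N : ℂ) - (i : ℂ))) *
    (∏ i ∈ range r, ((N : ℂ) + y - x - (i : ℂ))) * ((N : ℂ) + y - x - (r : ℂ)) *
    (∏ i ∈ Ico r q, (x + (i : ℂ)))) * chooseC N r

lemma cert (N p r : ℕ) (x y : ℂ) :
    hterm N (p + 2) x y r - Ac N (p + 1) x y * hterm N (p + 1) x y r -
        Bc N (p + 1) x y * hterm N p x y r =
      Wc N (p + 1) x y (r + 1) - Wc N (p + 1) x y r := by
  rcases Nat.lt_or_ge r (p + 2) with hrq | hrq
  · have hc : ((p : ℂ) + 2 - (r : ℂ)) ≠ 0 := by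
      have h1 : (r : ℂ) ≠ (p : ℂ) + 2 := by
        intro h
        have : (r : ℂ) = ((p + 2 : ℕ) : ℂ) := by push_cast; linear_combination h
        exact absurd (Nat.cast_injective this) (Nat.ne_of_lt hrq)
      exact sub_ne_zero.mpr fun h => h1 (by linear_combination -h)
    apply mul_left_cancel₀ hc
    have e1 := relR N (p + 1) r x y
    have e2 := relR N p r x y
    have e3 := relW1 N (p + 1) r x y
    have e4 := relW2 N (p + 1) r x y
    simp only [show p + 1 + 1 = p + 2 from rfl] at e1
    push_cast at e1 e2 e3 e4
    unfold Ac Bc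
    push_cast
    linear_combination e1 + ((p : ℂ) + 2 - (r : ℂ)) * (y + (p : ℂ)) * e2 -
      ((p : ℂ) + 2 - (r : ℂ)) * e4 + e3
  · rcases Nat.lt_or_ge (p + 2) r with hr3 | hr3
    · rw [hterm_zero N (p + 2) x y r (by omega), hterm_zero N (p + 1) x y r (by omega),
        hterm_zero N p x y r (by omega)]
      have w1 : Wc N (p + 1) x y r = 0 := by
        unfold Wc; rw [prodz (p + 1) (r - 1) (by omega)]; ring
      have w2 : Wc N (p + 1) x y (r + 1) = 0 := by
        unfold Wc; simp only [Nat.add_sub_cancel]; rw [prodz (p + 1) r (by omega)]; ring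
      rw [w1, w2]; ring
    · have he : r = p + 2 := le_antisymm hr3 hrq
      subst he
      rw [hterm_zero N (p + 1) x y (p + 2) (by omega), hterm_zero N p x y (p + 2) (by omega)]
      have w2 : Wc N (p + 1) x y (p + 2 + 1) = 0 := by
        unfold Wc; simp only [Nat.add_sub_cancel]; rw [prodz (p + 1) (p + 2) (by omega)]; ring
      rw [w2]
      unfold hterm Wc
      rw [show p + 2 - 1 = p + 1 from rfl, Finset.Ico_self, Finset.Ico_self]
      simp only [Finset.prod_empty]
      have kf := key_fall (p + 1) (p + 1)
      have ps := Finset.prod_range_succ (fun j : ℕ => ((p : ℂ)) + 2 - (j : ℂ)) (p + 1)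
      simp only [show p + 1 + 1 = p + 2 from rfl] at ps kf

      have hcast : (∏ j ∈ range (p + 2), (((p + 2 : ℕ) : ℂ) - (j : ℂ))) =
          ∏ j ∈ range (p + 2), ((p : ℂ) + 2 - (j : ℂ)) :=
        Finset.prod_congr rfl (fun j _ => by push_cast; ring)
      have hcast2 : (∏ j ∈ range (p + 1), (((p + 1 : ℕ) : ℂ) - (j : ℂ))) =
          ∏ j ∈ range (p + 1), ((p : ℂ) + 1 - (j : ℂ)) :=
        Finset.prod_congr rfl (fun j _ => by push_cast; ring)
      rw [hcast, hcast2]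
      push_cast at kf ps ⊢
      have ekf : (∏ x ∈ range (p + 1), ((p : ℂ) + 1 + 1 - (x : ℂ))) =
          ∏ x ∈ range (p + 1), ((p : ℂ) + 2 - (x : ℂ)) :=
        Finset.prod_congr rfl (fun _ _ => by ring)
      rw [ekf] at kf
      linear_combination ((N.choose (p + 2) : ℂ) *
          (∏ i ∈ range (p + 2), ((N : ℂ) + y - x - (i : ℂ)))) * ps +
        ((N.choose (p + 2) : ℂ) * (∏ i ∈ range (p + 2), ((N : ℂ) + y - x - (i : ℂ)))) * kf

lemma hrec (N p : ℕ) (x y : ℂ) :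
    hsum N (p + 2) x y =
      Ac N (p + 1) x y * hsum N (p + 1) x y + Bc N (p + 1) x y * hsum N p x y := by
  have hs : ∑ r ∈ range (N + 1),
      (hterm N (p + 2) x y r - Ac N (p + 1) x y * hterm N (p + 1) x y r -
        Bc N (p + 1) x y * hterm N p x y r) =
      ∑ r ∈ range (N + 1), (Wc N (p + 1) x y (r + 1) - Wc N (p + 1) x y r) :=
    Finset.sum_congr rfl fun r _ => cert N p r x y
  rw [Finset.sum_range_sub (Wc N (p + 1) x y) (N + 1)] at hs
  have wN : Wc N (p + 1) x y (N + 1) = 0 := by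
    simp [Wc, Nat.choose_succ_self]
  have w0 : Wc N (p + 1) x y 0 = 0 := by simp [Wc]
  rw [wN, w0] at hs
  simp only [Finset.sum_sub_distrib, ← Finset.mul_sum] at hs
  unfold hsum
  linear_combination hs

lemma hsum_one (N : ℕ) (x y : ℂ) : hsum N 1 x y = (N : ℂ) * ((N : ℂ) + x + y) := by
  cases N with
  | zero =>
    simp [hsum, hterm, Finset.sum_range_one, Nat.Ico_zero_eq_range,
      Finset.prod_range_one]
  | succ n =>
    have hsub : range 2 ⊆ range (n + 1 + 1) := Finset.range_subset_range.mpr (by omega)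
    have hzz : ∀ r ∈ range (n + 1 + 1), r ∉ range 2 → hterm (n + 1) 1 x y r = 0 := by
      intro r _ hr2
      exact hterm_zero _ 1 x y r (by simp [Finset.mem_range] at hr2; omega)
    unfold hsum
    rw [← Finset.sum_subset hsub hzz]
    rw [Finset.sum_range_succ, Finset.sum_range_one]
    unfold hterm
    simp [Nat.Ico_zero_eq_range, Finset.prod_range_one, Finset.Ico_self]
    push_cast
    ring

lemma Ac_symm (N q : ℕ) (x y : ℂ) : Ac N q x y = Ac N q y x := by unfold Ac; ring
lemma Bc_symm (N q : ℕ) (x y : ℂ) : Bc N q x y = Bc N q y x := by unfold Bc; ring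

lemma hsum_symm (N : ℕ) : ∀ q, ∀ x y : ℂ, hsum N q x y = hsum N q y x := by
  intro q
  induction q using Nat.twoStepInduction with
  | zero =>
    intro x y
    unfold hsum
    refine Finset.sum_congr rfl fun r _ => ?_
    cases r with
    | zero => simp [hterm]
    | succ s => rw [hterm_zero N 0 x y (s + 1) (Nat.succ_pos s),
        hterm_zero N 0 y x (s + 1) (Nat.succ_pos s)]
  | one =>
    intro x y
    rw [hsum_one, hsum_one]; ring
  | more p ih1 ih2 =>
    intro x y
    rw [hrec N p x y, hrec N p y x, ih1 x y, ih2 x y, Ac_symm, Bc_symm]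

lemma descCast (q r : ℕ) (h : r ≤ q) :
    ((q.descFactorial r : ℕ) : ℂ) = ∏ j ∈ range r, ((q : ℂ) - (j : ℂ)) := by
  rw [Nat.descFactorial_eq_prod_range, Nat.cast_prod]
  exact Finset.prod_congr rfl fun i hi =>
    Nat.cast_sub (le_trans (le_of_lt (Finset.mem_range.mp hi)) h)

lemma fact_ratio1 (q r : ℕ) (h : r ≤ q) :
    ((q.factorial : ℂ)) / (((q - r).factorial : ℕ) : ℂ) = ∏ j ∈ range r, ((q : ℂ) - (j : ℂ)) := by
  rw [div_eq_iff (by exact_mod_cast (q - r).factorial_ne_zero), ← descCast q r h]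
  rw [← Nat.cast_mul, mul_comm (q.descFactorial r) ((q - r).factorial)]
  exact_mod_cast congrArg (fun n : ℕ => (n : ℂ)) (Nat.factorial_mul_descFactorial h).symm

lemma fact_ratio2 (N q r : ℕ) (hq : q ≤ 2 * N) (h : r ≤ q) :
    (((2 * N - r).factorial : ℕ) : ℂ) / (((2 * N - q).factorial : ℕ) : ℂ) =
      ∏ i ∈ Ico r q, (2 * (N : ℂ) - (i : ℂ)) := by
  have key : (((2 * N - r).descFactorial (q - r) : ℕ) : ℂ) =
      ∏ i ∈ Ico r q, (2 * (N : ℂ) - (i : ℂ)) := by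
    rw [Nat.descFactorial_eq_prod_range, Nat.cast_prod,
      Finset.prod_Ico_eq_prod_range (fun i : ℕ => 2 * (N : ℂ) - (i : ℂ))]
    refine Finset.prod_congr rfl fun i hi => ?_
    have hi' : i < q - r := Finset.mem_range.mp hi
    have h1 : r + i ≤ 2 * N := by omega
    have h2 : 2 * N - r - i = 2 * N - (r + i) := by omega
    rw [h2, Nat.cast_sub h1]
    push_cast
    ring
  rw [div_eq_iff (by exact_mod_cast (2 * N - q).factorial_ne_zero), ← key, ← Nat.cast_mul]
  have hfac : (2 * N - r - (q - r)).factorial * (2 * N - r).descFactorial (q - r) =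
      (2 * N - r).factorial := Nat.factorial_mul_descFactorial (by omega)
  have h3 : 2 * N - r - (q - r) = 2 * N - q := by omega
  rw [h3] at hfac
  exact_mod_cast congrArg (fun n : ℕ => (n : ℂ)) ((mul_comm _ _).trans hfac).symm



lemma link (N q : ℕ) (hq : q ≤ 2 * N) (a m' : ℤ) :
    alphaTilde N q a m' =
      hsum N q ((((a + m') / 2 : ℤ) : ℂ) - (N : ℂ))
        ((((a + m') / 2 : ℤ) : ℂ) - (N : ℂ) - (m' : ℂ)) := by
  unfold alphaTilde hsum
  rw [← Finset.sum_subset (Finset.range_subset_range.mpr (by omega : min q N + 1 ≤ N + 1))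
    (fun r hr hr2 => hterm_zero N q _ _ r (by
      simp only [Finset.mem_range] at hr hr2
      omega))]
  refine Finset.sum_congr rfl fun r hr => ?_
  have hrq : r ≤ q := by simp only [Finset.mem_range] at hr; omega
  rw [fact_ratio1 q r hrq, fact_ratio2 N q r hq hrq]
  unfold hterm
  have e1 : (∏ i ∈ range r,
      ((N : ℂ) + ((((a + m') / 2 : ℤ) : ℂ) - (N : ℂ) - (m' : ℂ)) -
        ((((a + m') / 2 : ℤ) : ℂ) - (N : ℂ)) - (i : ℂ))) =
      ∏ i ∈ range r, ((N : ℂ) - (m' : ℂ) - (i : ℂ)) :=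
    Finset.prod_congr rfl fun i _ => by ring
  have e2 : (∏ i ∈ Ico r q, (((((a + m') / 2 : ℤ) : ℂ) - (N : ℂ)) + (i : ℂ))) =
      ∏ i ∈ Ico r q, ((((a + m') / 2 : ℤ) : ℂ) - (N : ℂ) + (i : ℂ)) :=
    Finset.prod_congr rfl fun i _ => by ring
  rw [e1, e2]
  ring

end St11

/-- `α̃(a,m) = α̃(a,-m)`. -/
theorem stmt11 (N : ℕ) (m : ℤ) (hm : (N : ℤ) < m) (a : ℤ) (ha : m + 2 * (N : ℤ) + 2 ≤ a)
    (q : ℕ) (hq : q ≤ 2 * N) :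
    alphaTilde N q a m = alphaTilde N q a (-m) := by
  have hdiv : (a + m) / 2 = (a - m) / 2 + m := by
    rw [show a + m = (a - m) + m * 2 by ring, Int.add_mul_ediv_right _ _ two_ne_zero]
  have l1 := St11.link N q hq a m
  have l2 := St11.link N q hq a (-m)
  have e1 : ((((a + -m) / 2 : ℤ) : ℂ)) - (N : ℂ) =
      ((((a + m) / 2 : ℤ) : ℂ)) - (N : ℂ) - (m : ℂ) := by
    rw [show a + -m = a - m by ring, show (a - m) / 2 = (a + m) / 2 - m by omega]
    push_cast
    ring
  have e2 : ((((a + -m) / 2 : ℤ) : ℂ)) - (N : ℂ) - ((-m : ℤ) : ℂ) =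
      ((((a + m) / 2 : ℤ) : ℂ)) - (N : ℂ) := by
    push_cast at e1 ⊢
    linear_combination e1
  rw [l1, l2, e2, e1]
  exact St11.hsum_symm N q _ _
end
end

section
/- Let N ∈ ℕ, m ∈ ℤ with m > N, a ∈ ℕ with a ≥ m, q ∈ ℤ with max(0, N-a+m) ≤ q ≤ 2N, and set λ := N+1-a-q. Then β(λ,N,a,m) is a (real and) strictly positive number. -/
noncomputable section

open Polynomial Finset

/-!
At `λ = N + 1 - a - q` and `m = N + M + 1` every product in `β` is a rising or falling factorial,
and `β` becomes the integer `∑_r (-1)^r (2N-r)! (M+1)^(r) C(q,r) C(K,N-r)` with `K = ⌊(a+m)/2⌋`.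
Pascal's rule in `q` shows that lowering `q` by one adds `M + 1` times a sum of the same shape with
`(2N, M, N)` replaced by `(2N-1, M+1, N-1)`, while at `q = 2N` the alternating Chu–Vandermonde
identity evaluates the sum to `(2N)! C(K-M-1, N)`, which is positive because `m ≤ a`.
Induction on `N`, and downwards on `q`, gives positivity.
-/

open scoped Nat

theorem sum_range_neg_one_pow_mul_add_choose_mul_choose (M K N : ℕ) (h : M + 1 ≤ K) :
    ∑ r ∈ range (N + 1), (-1 : ℤ) ^ r * ((M + r).choose r * K.choose (N - r) : ℕ) =
      (K - (M + 1)).choose N := by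
  -- Chu–Vandermonde in the binomial ring `ℤ`, with upper indices `-(M + 1)` and `K`
  have key := Ring.add_choose_eq (r := -((M + 1 : ℕ) : ℤ)) (s := (K : ℤ)) N (Commute.all _ _)
  rw [Finset.Nat.sum_antidiagonal_eq_sum_range_succ_mk,
    show -((M + 1 : ℕ) : ℤ) + K = ((K - (M + 1) : ℕ) : ℤ) by omega, Ring.choose_natCast] at key
  rw [key]
  refine sum_congr rfl fun r _ ↦ ?_
  rw [Ring.choose_neg, show ((M + 1 : ℕ) : ℤ) + r - 1 = ((M + r : ℕ) : ℤ) by push_cast; ring,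
    Ring.choose_natCast, Ring.choose_natCast, Units.smul_def, smul_eq_mul,
    Int.coe_negOnePow_natCast]
  push_cast
  ring

def altFactorialSum (A M q K N : ℕ) : ℤ :=
  ∑ r ∈ range (N + 1),
    (-1) ^ r * ((A - r)! * (M + 1).ascFactorial r * q.choose r * K.choose (N - r) : ℕ)

theorem altFactorialSum_zero (A M q K : ℕ) : altFactorialSum A M q K 0 = A ! := by
  simp [altFactorialSum]

theorem altFactorialSum_self (A M K N : ℕ) (hN : N ≤ A) (hK : M + 1 ≤ K) :
    altFactorialSum A M A K N = A ! * (K - (M + 1)).choose N := by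
  rw [altFactorialSum, ← sum_range_neg_one_pow_mul_add_choose_mul_choose M K N hK, mul_sum]
  refine sum_congr rfl fun r hr ↦ ?_
  have hrA : r ≤ A := by have := mem_range.mp hr; omega
  rw [Nat.ascFactorial_eq_factorial_mul_choose, ← Nat.choose_mul_factorial_mul_factorial hrA]
  push_cast
  ring

theorem altFactorialSum_succ (A M q K N : ℕ) :
    altFactorialSum (A + 1) M q K (N + 1) =
      altFactorialSum (A + 1) M (q + 1) K (N + 1) + (M + 1) * altFactorialSum A (M + 1) q K N := by
  rw [← sub_eq_iff_eq_add', altFactorialSum, altFactorialSum, altFactorialSum, ← sum_sub_distrib,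
    sum_range_succ', mul_sum]
  simp only [Nat.choose_succ_succ', Nat.ascFactorial_succ, Nat.choose_zero_right, sub_self,
    add_zero]
  refine sum_congr rfl fun r _ ↦ ?_
  rw [show A + 1 - (r + 1) = A - r by omega, show N + 1 - (r + 1) = N - r by omega,
    ← Nat.succ_ascFactorial]
  push_cast
  ring

theorem altFactorialSum_pos :
    ∀ {N A M q K : ℕ}, q ≤ A → N ≤ A → N + M + 1 ≤ K → 0 < altFactorialSum A M q K N
  | 0, A, _, _, _, _, _, _ => by
    rw [altFactorialSum_zero]
    exact_mod_cast Nat.factorial_pos A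
  | N + 1, A + 1, M, _, K, hq, hN, hK => by
    induction hq using Nat.decreasingInduction with
    | self =>
      rw [altFactorialSum_self _ _ _ _ hN (by omega)]
      have := Nat.choose_pos (show N + 1 ≤ K - (M + 1) by omega)
      positivity
    | of_succ q hq ih =>
      rw [altFactorialSum_succ]
      have := altFactorialSum_pos (N := N) (M := M + 1) (K := K)
        (show q ≤ A by omega) (by omega) (by omega)
      positivity

theorem prod_range_neg_natCast_sub {R : Type*} [CommRing R] (n r : ℕ) :
    ∏ i ∈ range r, (-(n : R) - i) = (-1) ^ r * n.ascFactorial r := by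
  have h := prod_neg (s := range r) fun i ↦ ((n + i : ℕ) : R)
  rw [card_range] at h
  rw [Nat.ascFactorial_eq_prod_range, Nat.cast_prod, ← h]
  exact prod_congr rfl fun i _ ↦ by push_cast; ring

theorem prod_range_sub_natCast {R : Type*} [CommRing R] (n r : ℕ) :
    ∏ i ∈ range r, ((i : R) - n) = (-1) ^ r * n.descFactorial r := by
  have h := prod_neg (s := range r) fun i ↦ (n - i : R)
  rw [card_range] at h
  rw [Nat.descFactorial_eq_prod_range, ← prod_range_natCast_sub, ← h]
  exact prod_congr rfl fun i _ ↦ by ring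

theorem betaF_eq_altFactorialSum (N M a q K : ℕ) (hK : ((a : ℤ) + (N + M + 1) + 2) / 2 = K + 1) :
    betaF ((N : ℂ) + 1 - a - q) N a (N + M + 1) = altFactorialSum (2 * N) M q K N := by
  rw [betaF, altFactorialSum, Int.cast_sum]
  refine sum_congr rfl fun r hr ↦ ?_
  have hrN : r ≤ N := by have := mem_range.mp hr; omega
  have hM : ∏ i ∈ range r, ((N : ℂ) - ((N + M + 1 : ℤ) : ℂ) - i) =
      (-1) ^ r * (M + 1).ascFactorial r := by
    rw [← prod_range_neg_natCast_sub]
    exact prod_congr rfl fun i _ ↦ by push_cast; ring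
  have hq : ∏ i ∈ range r, ((N : ℂ) + 1 - a - q + ((a : ℤ) : ℂ) - N - 1 + i) =
      (-1) ^ r * q.descFactorial r := by
    rw [← prod_range_sub_natCast]
    exact prod_congr rfl fun i _ ↦ by push_cast; ring
  have hK' : ∏ i ∈ range (N - r), ((((a + (N + M + 1 : ℤ) + 2) / 2 : ℤ) : ℂ) - (i + 1)) =
      K.descFactorial (N - r) := by
    rw [hK, Nat.descFactorial_eq_prod_range, ← prod_range_natCast_sub]
    exact prod_congr rfl fun i _ ↦ by push_cast; ring
  have hN : (N.choose r * r ! * (N - r)! : ℂ) = N ! := by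
    exact_mod_cast Nat.choose_mul_factorial_mul_factorial hrN
  have hs : ((-1 : ℂ) ^ r) ^ 2 = 1 := by rw [← pow_mul, mul_comm, pow_mul, neg_one_sq, one_pow]
  have hNz : (N ! : ℂ) ≠ 0 := Nat.cast_ne_zero.mpr N.factorial_ne_zero
  rw [C0r, hM, hq, hK', Nat.descFactorial_eq_factorial_mul_choose,
    Nat.descFactorial_eq_factorial_mul_choose]
  push_cast
  field_simp
  linear_combination ((N.choose r : ℂ) * r ! * (N - r)! * (2 * N - r)! * (M + 1).ascFactorial r *
      q.choose r * K.choose (N - r)) * hs +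
    ((2 * N - r)! * (M + 1).ascFactorial r * q.choose r * K.choose (N - r) : ℂ) * hN

/-- `β(λ,N,a,m)` is real and strictly positive for `λ = N+1-a-q`. -/
theorem stmt12 (N : ℕ) (m : ℤ) (hm : (N : ℤ) < m) (a : ℕ) (ha : m ≤ (a : ℤ))
    (q : ℤ) (hq1 : max 0 ((N : ℤ) - a + m) ≤ q) (hq2 : q ≤ 2 * N) :
    ∃ x : ℝ, 0 < x ∧ betaF ((N : ℂ) + 1 - (a : ℂ) - (q : ℂ)) N (a : ℤ) m = (x : ℂ) := by
  obtain ⟨q, rfl⟩ : ∃ n : ℕ, q = n := ⟨q.toNat, by omega⟩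
  obtain ⟨M, rfl⟩ : ∃ M : ℕ, m = N + M + 1 := ⟨(m - N - 1).toNat, by omega⟩
  obtain ⟨K, hK⟩ : ∃ K : ℕ, ((a : ℤ) + (N + M + 1) + 2) / 2 = K + 1 :=
    ⟨((a + (N + M + 1 : ℤ)) / 2).toNat, by omega⟩
  refine ⟨altFactorialSum (2 * N) M q K N,
    by exact_mod_cast altFactorialSum_pos (by omega) (by omega) (by omega), ?_⟩
  exact_mod_cast betaF_eq_altFactorialSum N M a q K hK
end
end

section
/- Let N ∈ ℕ, m ∈ ℤ with m > N, a ∈ ℕ, q ∈ ℤ with max(0, N-a+m) ≤ q ≤ 2N, and set λ := N+1-a-q. Then for every integer d with 0 ≤ d ≤ N-1, C_{0,d}^- = Σ_{r=0}^{d} binom(q-r, d-r) (∏_{i=0}^{d-r-1}(-m+i)) C_{0,r}^+, where binom(x,k) := (∏_{i=0}^{k-1}(x-i))/k! for x ∈ ℤ and k ∈ ℕ. -/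
noncomputable section

open Polynomial Finset

namespace Stmt13Aux

/-- Falling-factorial-like product `∏_{i<n} (x - i)`. -/
def ff (x : ℂ) (n : ℕ) : ℂ := ∏ i ∈ range n, (x - (i : ℂ))

@[simp] lemma ff_zero (x : ℂ) : ff x 0 = 1 := by simp [ff]

lemma ff_succ (x : ℂ) (n : ℕ) : ff x (n + 1) = ff x n * (x - (n : ℂ)) :=
  Finset.prod_range_succ _ _

lemma ff_succ' (x : ℂ) (n : ℕ) : ff x (n + 1) = x * ff (x - 1) n := by
  rw [ff, Finset.prod_range_succ', ff]
  push_cast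
  rw [sub_zero, mul_comm]
  congr 1
  exact Finset.prod_congr rfl fun i _ => by push_cast; ring

lemma prod_negshift (z : ℂ) (n : ℕ) :
    ∏ i ∈ range n, (-z + (i : ℂ)) = (-1) ^ n * ff z n := by
  rw [ff, show ∏ i ∈ range n, (-z + (i : ℂ)) = ∏ i ∈ range n, ((-1) * (z - (i : ℂ))) from
    Finset.prod_congr rfl fun i _ => by ring, Finset.prod_mul_distrib, Finset.prod_const,
    Finset.card_range]

lemma cast_desc (n k : ℕ) (h : k ≤ n) : (n.descFactorial k : ℂ) = ff (n : ℂ) k := by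
  rw [Nat.descFactorial_eq_prod_range, Nat.cast_prod, ff]
  refine Finset.prod_congr rfl fun i hi => ?_
  have hin : i ≤ n := le_trans (le_of_lt (Finset.mem_range.mp hi)) h
  rw [Nat.cast_sub hin]

lemma choose_cast (n k : ℕ) (h : k ≤ n) :
    (n.choose k : ℂ) * (k.factorial : ℂ) = ff (n : ℂ) k := by
  rw [← cast_desc n k h, ← Nat.cast_mul, Nat.descFactorial_eq_factorial_mul_choose]
  push_cast; ring

/-- The auxiliary term used in the telescoping certificate. -/
def wAux (x y : ℂ) (d r : ℕ) : ℂ :=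
  (d.choose r : ℂ) * ((y - (r : ℂ)) * (y - x - (r : ℂ))) *
    (ff x (d - r) * ff (2 * y - (r : ℂ)) (d - r) * ff y r * ff (y - x) r)

/-- The telescoping sequence. -/
def hAux (x y : ℂ) (d : ℕ) : ℕ → ℂ
  | 0 => 0
  | (s + 1) => wAux x y d s

lemma step_term (x y : ℂ) (d r : ℕ) (hr : r ≤ d) :
    (((d + 1).choose r : ℂ)) *
        (ff x (d + 1 - r) * ff (2 * y - (r : ℂ)) (d + 1 - r) * ff y r * ff (y - x) r)
      = (y - (d : ℂ)) * (x + y - (d : ℂ)) *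
          ((d.choose r : ℂ) *
            (ff x (d - r) * ff (2 * y - (r : ℂ)) (d - r) * ff y r * ff (y - x) r))
        + (hAux x y d r - hAux x y d (r + 1)) := by
  obtain ⟨k, rfl⟩ : ∃ k, d = r + k := ⟨d - r, by omega⟩
  cases r with
  | zero =>
    have e1 : 0 + k - 0 = k := by omega
    have e2 : 0 + k + 1 - 0 = k + 1 := by omega
    simp only [hAux, wAux, e1, e2, Nat.choose_zero_right, Nat.zero_add, Nat.sub_zero, ff_zero,
      Nat.cast_zero, Nat.cast_one, Nat.cast_ofNat, sub_zero]
    rw [ff_succ x k, ff_succ (2 * y) k]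
    push_cast
    ring
  | succ s =>
    have e1 : s + 1 + k - (s + 1) = k := by omega
    have e2 : s + 1 + k + 1 - (s + 1) = k + 1 := by omega
    have e3 : s + 1 + k - s = k + 1 := by omega
    simp only [hAux, wAux, e1, e2, e3]
    have hc1 : (((s + 1 + k + 1).choose (s + 1)) : ℂ)
        = ((s + 1 + k).choose s : ℂ) + ((s + 1 + k).choose (s + 1) : ℂ) := by
      rw [show s + 1 + k + 1 = (s + 1 + k) + 1 from rfl, Nat.choose_succ_succ']
      push_cast; ring
    have hc2 : ((s + 1 + k).choose (s + 1) : ℂ) * ((s : ℂ) + 1)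
        = ((s + 1 + k).choose s : ℂ) * ((k : ℂ) + 1) := by
      have h := Nat.choose_succ_right_eq (s + 1 + k) s
      rw [show s + 1 + k - s = k + 1 by omega] at h
      exact_mod_cast h
    push_cast
    rw [ff_succ x k, ff_succ (2 * y - ((s : ℂ) + 1)) k, ff_succ y s, ff_succ (y - x) s,
      ff_succ' (2 * y - (s : ℂ)) k,
      show (2 * y - (s : ℂ) - 1 : ℂ) = 2 * y - ((s : ℂ) + 1) by ring, hc1]
    linear_combination ((x - (k : ℂ)) * (y - (s : ℂ)) * (y - x - (s : ℂ)) *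
      (ff x k * ff (2 * y - ((s : ℂ) + 1)) k * ff y s * ff (y - x) s)) * hc2

lemma core (x y : ℂ) (d : ℕ) :
    ∑ r ∈ range (d + 1), ((d.choose r : ℂ) *
        (ff x (d - r) * ff (2 * y - (r : ℂ)) (d - r) * ff y r * ff (y - x) r))
      = ff y d * ff (x + y) d := by
  induction d with
  | zero => simp [ff]
  | succ d ih =>
    rw [Finset.sum_range_succ]
    have key : ∀ r ∈ range (d + 1),
        (((d + 1).choose r : ℂ)) *
            (ff x (d + 1 - r) * ff (2 * y - (r : ℂ)) (d + 1 - r) * ff y r * ff (y - x) r)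
          = (y - (d : ℂ)) * (x + y - (d : ℂ)) *
              ((d.choose r : ℂ) *
                (ff x (d - r) * ff (2 * y - (r : ℂ)) (d - r) * ff y r * ff (y - x) r))
            + (hAux x y d r - hAux x y d (r + 1)) := fun r hr =>
      step_term x y d r (Finset.mem_range_succ_iff.mp hr)
    rw [Finset.sum_congr rfl key, Finset.sum_add_distrib, ← Finset.mul_sum, ih,
      Finset.sum_range_sub' (hAux x y d)]
    simp only [hAux, wAux, Nat.sub_self, Nat.choose_self, ff_zero, Nat.cast_one]
    rw [ff_succ y d, ff_succ (x + y) d, ff_succ (y - x) d]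
    push_cast
    ring

end Stmt13Aux

open Stmt13Aux in
/-- the identity `C_{0,d}^- = Σ_r binom(q-r, d-r) (∏ (-m+i)) C_{0,r}^+`. -/
theorem stmt13 (N a : ℕ) (m : ℤ) (hm : (N : ℤ) < m) (q : ℤ)
    (hq1 : max 0 ((N : ℤ) - a + m) ≤ q) (hq2 : q ≤ 2 * N) :
    ∀ d : ℕ, (d : ℤ) ≤ (N : ℤ) - 1 →
      Cm ((N : ℂ) + 1 - (a : ℂ) - (q : ℂ)) a N m 0 d =
        ∑ r ∈ Finset.range (d + 1),
          zbinom (q - (r : ℤ)) (d - r) *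
            (∏ i ∈ Finset.range (d - r), (-(m : ℂ) + (i : ℂ))) *
            Cp ((N : ℂ) + 1 - (a : ℂ) - (q : ℂ)) a N m 0 r := by
  intro d hd
  have hdN : d < N := by
    have h1 : (d : ℤ) < (N : ℤ) := by omega
    exact_mod_cast h1
  have hqprod : ∀ r : ℕ, (∏ i ∈ range r,
      ((N : ℂ) + 1 - (a : ℂ) - (q : ℂ) + (a : ℂ) - (N : ℂ) - 1 + (i : ℂ)))
      = (-1) ^ r * ff (q : ℂ) r := by
    intro r
    rw [show (∏ i ∈ range r, ((N : ℂ) + 1 - (a : ℂ) - (q : ℂ) + (a : ℂ) - (N : ℂ) - 1 + (i : ℂ)))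
        = ∏ i ∈ range r, (-(q : ℂ) + (i : ℂ)) from Finset.prod_congr rfl fun i _ => by ring]
    exact prod_negshift _ r
  have hCm : Cm ((N : ℂ) + 1 - (a : ℂ) - (q : ℂ)) a N m 0 d
      = (((2 * N - d).factorial : ℂ) / ((N.factorial : ℂ) * (d.factorial : ℂ))) *
          ((-1) ^ d * ff (q : ℂ) d) * (ff (N : ℂ) d * ff ((m : ℂ) + (N : ℂ)) d) := by
    unfold Cm
    rw [Nat.sub_zero, Nat.add_zero, hqprod d,
      show (∏ i ∈ range d, ((N : ℂ) + (m : ℂ) - (i : ℂ))) = ff ((m : ℂ) + (N : ℂ)) d from by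
        rw [ff]; exact Finset.prod_congr rfl fun i _ => by ring]
    rw [← choose_cast N d hdN.le]
    have hfd : (d.factorial : ℂ) ≠ 0 := Nat.cast_ne_zero.mpr d.factorial_ne_zero
    have hfN : (N.factorial : ℂ) ≠ 0 := Nat.cast_ne_zero.mpr N.factorial_ne_zero
    field_simp
  rw [hCm, show ff (N : ℂ) d * ff ((m : ℂ) + (N : ℂ)) d
      = ∑ r ∈ range (d + 1), ((d.choose r : ℂ) *
          (ff (m : ℂ) (d - r) * ff (2 * (N : ℂ) - (r : ℂ)) (d - r) * ff (N : ℂ) r *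
            ff ((N : ℂ) - (m : ℂ)) r)) from (core (m : ℂ) (N : ℂ) d).symm,
    Finset.mul_sum]
  refine Finset.sum_congr rfl fun r hr => ?_
  have hrd : r ≤ d := Finset.mem_range_succ_iff.mp hr
  have hrN : r ≤ N := le_trans hrd hdN.le
  have hfact : ((2 * N - r).factorial : ℂ)
      = ((2 * N - d).factorial : ℂ) * ff (2 * (N : ℂ) - (r : ℂ)) (d - r) := by
    have h1 := Nat.factorial_mul_descFactorial (show d - r ≤ 2 * N - r by omega)
    rw [show 2 * N - r - (d - r) = 2 * N - d by omega] at h1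
    have h2 : ((2 * N - r).factorial : ℂ)
        = ((2 * N - d).factorial : ℂ) * ((2 * N - r).descFactorial (d - r) : ℂ) := by
      exact_mod_cast h1.symm
    rw [h2, cast_desc _ _ (show d - r ≤ 2 * N - r by omega),
      show (((2 * N - r : ℕ)) : ℂ) = 2 * (N : ℂ) - (r : ℂ) by
        rw [Nat.cast_sub (show r ≤ 2 * N by omega)]; push_cast; ring]
  have hchN : (N.choose r : ℂ) * (r.factorial : ℂ) = ff (N : ℂ) r := choose_cast N r hrN
  have hchd : (d.choose r : ℂ) * (r.factorial : ℂ) * ((d - r).factorial : ℂ)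
      = (d.factorial : ℂ) := by
    exact_mod_cast Nat.choose_mul_factorial_mul_factorial hrd
  have hzb : zbinom (q - (r : ℤ)) (d - r)
      = ff ((q : ℂ) - (r : ℂ)) (d - r) / (((d - r).factorial : ℂ)) := by
    unfold zbinom
    rw [ff]
    congr 1
    exact Finset.prod_congr rfl fun i _ => by push_cast; ring
  have hneg : (∏ i ∈ range (d - r), (-(m : ℂ) + (i : ℂ)))
      = (-1) ^ (d - r) * ff (m : ℂ) (d - r) := prod_negshift _ _
  have hqq : ff ((q : ℂ) - (r : ℂ)) (d - r) * ff (q : ℂ) r = ff (q : ℂ) d := by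
    have h3 := Finset.prod_range_add (fun i => (q : ℂ) - (i : ℂ)) r (d - r)
    rw [show r + (d - r) = d by omega] at h3
    rw [ff, ff, ff, h3, mul_comm]
    congr 1
    exact Finset.prod_congr rfl fun i _ => by push_cast; ring
  have hsgn : ((-1 : ℂ)) ^ (d - r) * (-1) ^ r = (-1) ^ d := by
    rw [← pow_add, show d - r + r = d by omega]
  unfold Cp
  rw [Nat.sub_zero, Nat.add_zero, hqprod r, hzb, hneg, hfact,
    show (∏ i ∈ range r, ((N : ℂ) - (m : ℂ) - (i : ℂ))) = ff ((N : ℂ) - (m : ℂ)) r from rfl,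
    ← hqq, ← hsgn, ← hchN, ← hchd]
  have hfr : (r.factorial : ℂ) ≠ 0 := Nat.cast_ne_zero.mpr r.factorial_ne_zero
  have hfk : ((d - r).factorial : ℂ) ≠ 0 := Nat.cast_ne_zero.mpr (d - r).factorial_ne_zero
  have hfN : (N.factorial : ℂ) ≠ 0 := Nat.cast_ne_zero.mpr N.factorial_ne_zero
  have hcdr : ((d.choose r : ℕ) : ℂ) ≠ 0 := Nat.cast_ne_zero.mpr (Nat.choose_pos hrd).ne'
  field_simp
end
end
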